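/- arXiv:2505.16745 — 5 statements merged into one kernel-verified Lean document; each statement's English description precedes it below -/
import Mathlib

section
/- Let H be a graph, S ⊆ V(H), let u, v, w ∈ V(H), and let r, q ∈ ℕ be positive integers. If u is not radius-r flip independent of v over S, and v is not radius-q flip independent of w over S, then u is not radius-(r+q) flip independent of w over S. (Equivalently: if some finite S' ⊆ S and S'-definable flip H' of H satisfy dist_{H'}(u,w) > r+q, then either some S-definable flip separates u,v at distance > r or some S-definable flip separates v,w at distance > q.) -/
open FirstOrder FirstOrder.Language

/-- First-order languages with symbol types in `Type 0`. -/
abbrev Lang : Type 1 := FirstOrder.Language.{0,0}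

namespace MS

/-! ### Expansions by unary predicates -/

/-- Relation symbols for a language consisting of countably many unary predicates. -/
inductive unaryRel : ℕ → Type
  | pred : ℕ → unaryRel 1

/-- The language consisting of countably many unary predicate symbols. -/
def unaryLang : Lang := ⟨fun _ => Empty, unaryRel⟩

/-- Interpreting the unary predicates by a family `U` of subsets of `M`
(a monadic lift / unary expansion). -/
def unaryStructure {M : Type} (U : ℕ → Set M) : unaryLang.Structure M where
  funMap := fun {_} f _ => Empty.elim f
  RelMap := fun {_} r x => match r with | .pred i => x 0 ∈ U i

/-! ### Induced substructures and elementary subsets (for relational languages) -/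

/-- The induced `L`-structure on a subset `A` of a relational `L`-structure. -/
def inducedStr (L : Lang) (hrel : L.IsRelational) {N : Type} (s : L.Structure N)
    (A : Set N) : L.Structure A where
  funMap := fun {n} f _ => ((hrel n).elim f)
  RelMap := fun {_} R x => s.RelMap R (fun i => (x i : N))

/-- `A` induces an elementary substructure of the relational structure `(N, s)`:
every first-order formula evaluated at a tuple from `A` has the same truth value in the
induced structure on `A` and in the big structure.  (This is `A ⪯ N`.) -/
def IsElemSub (L : Lang) (hrel : L.IsRelational) {N : Type} (s : L.Structure N)
    (A : Set N) : Prop :=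
  ∀ (n : ℕ) (φ : L.Formula (Fin n)) (x : Fin n → A),
    (letI := inducedStr L hrel s A; φ.Realize x) ↔
    (letI := s; φ.Realize (fun i => (x i : N)))

/-- A set of vertices induces an elementary substructure of a graph
(the graph being viewed as a first-order structure). -/
def GraphIsElemSub {V : Type} (H : SimpleGraph V) (A : Set V) : Prop :=
  ∀ (n : ℕ) (φ : Language.graph.Formula (Fin n)) (x : Fin n → A),
    (letI := (SimpleGraph.induce A H).structure; φ.Realize x) ↔
    (letI := H.structure; φ.Realize (fun i => (x i : V)))

/-! ### Gaifman graphs, walks -/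

/-- The Gaifman graph of a relational structure: distinct elements are adjacent iff
they occur together in some tuple of some relation. -/
def gaif (L : Lang) {N : Type} (s : L.Structure N) : SimpleGraph N where
  Adj u v := u ≠ v ∧ ∃ (n : ℕ) (R : L.Relations n) (x : Fin n → N),
    s.RelMap R x ∧ (∃ i, x i = u) ∧ (∃ j, x j = v)
  symm := ⟨fun _ _ ⟨hne, n, R, x, hR, hu, hv⟩ => ⟨hne.symm, n, R, x, hR, hv, hu⟩⟩
  loopless := ⟨fun _ h => h.1 rfl⟩

/-- `a` and `b` are at distance `> r` in `G`: every walk between them is longer than `r`. -/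
def FarApart {V : Type} (G : SimpleGraph V) (r : ℕ) (a b : V) : Prop :=
  ∀ p : G.Walk a b, r < p.length

/-- The ball of radius `r` around `a` in the Gaifman graph. -/
def ballSet (L : Lang) {N : Type} (s : L.Structure N) (r : ℕ) (a : N) : Set N :=
  {v | ∃ p : (gaif L s).Walk a v, p.length ≤ r}

/-! ### Flips of relational structures -/

/-- The `n`-ary relation `Rel` on `N` is definable by a quantifier-free formula of `L`
with parameters from `S`. -/
def QFDefinable (L : Lang) {N : Type} (s : L.Structure N) (S : Set N)
    (n : ℕ) (Rel : (Fin n → N) → Prop) : Prop :=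
  ∃ (k : ℕ) (φ : L.Formula (Fin n ⊕ Fin k)) (params : Fin k → N),
    φ.IsQF ∧ (∀ i, params i ∈ S) ∧
    ∀ x : Fin n → N, Rel x ↔ (letI := s; φ.Realize (Sum.elim x params))

/-- `(N, s')` is an `S`-flip of `(N, s)`: each relation of either structure is
quantifier-free definable in the other with parameters from `S`
(and the new language is again finite relational). -/
def IsFlip (L L' : Lang) {N : Type} (s : L.Structure N) (s' : L'.Structure N)
    (S : Set N) : Prop :=
  L'.IsRelational ∧ Finite (Σ n, L'.Relations n) ∧
  (∀ (n : ℕ) (R : L'.Relations n), QFDefinable L s S n (fun x => s'.RelMap R x)) ∧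
  (∀ (n : ℕ) (R : L.Relations n), QFDefinable L' s' S n (fun x => s.RelMap R x))

/-- `a ⫝_S^r b` for relational structures: some `S`-flip has no path of length `≤ r`
between `a` and `b` in its Gaifman graph, or `a = b ∈ S`. -/
def FlipIndepStruct (L : Lang) {N : Type} (s : L.Structure N)
    (S : Set N) (r : ℕ) (a b : N) : Prop :=
  (a = b ∧ a ∈ S) ∨
  ∃ (L' : Lang) (s' : L'.Structure N),
    IsFlip L L' s s' S ∧ FarApart (gaif L' s') r a b

/-- `X ⫝_S^r Y` for sets: some `S`-flip has no path of length `≤ r` in its Gaifman graph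
connecting an element of `X ∖ S` with an element of `Y`, nor an element of `X` with an
element of `Y ∖ S`. -/
def FlipIndepSetStruct (L : Lang) {N : Type} (s : L.Structure N)
    (S X Y : Set N) (r : ℕ) : Prop :=
  ∃ (L' : Lang) (s' : L'.Structure N), IsFlip L L' s s' S ∧
    ∀ x ∈ X, ∀ y ∈ Y, (x ∉ S ∨ y ∉ S) → FarApart (gaif L' s') r x y

/-! ### Flips of graphs -/

/-- Two vertices have the same atomic type over `S` in the graph `H`. -/
def SameAtomicType {V : Type} (H : SimpleGraph V) (S : Set V) (u v : V) : Prop :=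
  ∀ s ∈ S, (u = s ↔ v = s) ∧ (H.Adj u s ↔ H.Adj v s)

/-- `H'` is an `S`-definable flip of the graph `H`: between any two classes of the
partition of the vertices into atomic types over `S`, the adjacency relation is either
kept or complemented wholesale. -/
def IsDefFlip {V : Type} (H H' : SimpleGraph V) (S : Set V) : Prop :=
  ∀ a b a' b' : V, a ≠ b → a' ≠ b' →
    SameAtomicType H S a a' → SameAtomicType H S b b' →
    ((H.Adj a b ↔ H'.Adj a b) ↔ (H.Adj a' b' ↔ H'.Adj a' b'))

/-- `a ⫝_B^r c` for graphs: there are a finite `B' ⊆ B` and a `B'`-definable flip `H'`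
of `H` with `dist_{H'}(a, c) > r`. -/
def FlipIndepGraph {V : Type} (H : SimpleGraph V) (B : Set V) (r : ℕ) (a c : V) : Prop :=
  ∃ B' : Set V, B' ⊆ B ∧ B'.Finite ∧
    ∃ H' : SimpleGraph V, IsDefFlip H H' B' ∧ FarApart H' r a c

/-! ### Forking independence (finite satisfiability over a model) -/

/-- `tp(u / Ms ∪ {v})` is finitely satisfiable in `Ms`: every first-order formula with
parameters from `Ms ∪ {v}` satisfied by `u` is satisfied by some element of `Ms`. -/
def FinSatOver (L : Lang) {N : Type} (s : L.Structure N) (Ms : Set N) (u v : N) : Prop :=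
  ∀ (n : ℕ) (φ : L.Formula (Fin n ⊕ Fin 2)) (params : Fin n → N),
    (∀ i, params i ∈ Ms) →
    (letI := s; φ.Realize (Sum.elim params ![u, v])) →
    ∃ u' ∈ Ms, (letI := s; φ.Realize (Sum.elim params ![u', v]))

/-! ### Stability and dependence notions -/

/-- The partitioned formula `φ(x̄; ȳ)` is stable in the structure `(N, s)`:
for some `k` there is no half-graph of order `k` defined by `φ`. -/
def StablePartFormula (L : Lang) {N : Type} (s : L.Structure N) {p q : ℕ}
    (φ : L.Formula (Fin p ⊕ Fin q)) : Prop :=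
  ∃ k : ℕ, ¬ ∃ (a : Fin k → Fin p → N) (b : Fin k → Fin q → N),
    ∀ i j : Fin k, (letI := s; φ.Realize (Sum.elim (a i) (b j))) ↔ i ≤ j

/-- A structure is atomic-stable if every atomic formula, under every partition of its
free variables, is stable in it. -/
def AtomicStable (L : Lang) {N : Type} (s : L.Structure N) : Prop :=
  ∀ (p q : ℕ) (φ : L.Formula (Fin p ⊕ Fin q)), φ.IsAtomic → StablePartFormula L s φ

/-- A structure is stable if every partitioned first-order formula is stable in it. -/
def StableStruct (L : Lang) {N : Type} (s : L.Structure N) : Prop :=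
  ∀ (p q : ℕ) (φ : L.Formula (Fin p ⊕ Fin q)), StablePartFormula L s φ

/-- A single structure is monadically stable: no formula in the language expanded by
unary predicates can define arbitrarily long linear orders in unary expansions. -/
def MonStableStruct (L : Lang) {N : Type} (s : L.Structure N) : Prop :=
  ¬ ∃ φ : (L.sum unaryLang).Formula (Fin 2),
    ∀ n : ℕ, ∃ (U : ℕ → Set N) (v : Fin n → N),
      ∀ i j : Fin n,
        (letI := s; letI := unaryStructure U; φ.Realize ![v i, v j]) ↔ i ≤ j

/-- A single structure is monadically dependent. -/
def MonDepStruct (L : Lang) {N : Type} (s : L.Structure N) : Prop :=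
  ¬ ∃ (m m' : ℕ) (φ : (L.sum unaryLang).Formula (Fin m ⊕ Fin m')),
    ∀ k : ℕ, ∃ (U : ℕ → Set N) (a : Fin k → Fin m → N)
      (b : Finset (Fin k) → Fin m' → N),
      ∀ (i : Fin k) (J : Finset (Fin k)),
        (letI := s; letI := unaryStructure U;
          φ.Realize (Sum.elim (a i) (b J))) ↔ i ∈ J

/-- A single structure is existentially monadically dependent. -/
def ExistMonDepStruct (L : Lang) {N : Type} (s : L.Structure N) : Prop :=
  ¬ ∃ (m m' : ℕ) (φ : (L.sum unaryLang).Formula (Fin m ⊕ Fin m')),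
    φ.IsExistential ∧
    ∀ k : ℕ, ∃ (U : ℕ → Set N) (a : Fin k → Fin m → N)
      (b : Finset (Fin k) → Fin m' → N),
      ∀ (i : Fin k) (J : Finset (Fin k)),
        (letI := s; letI := unaryStructure U;
          φ.Realize (Sum.elim (a i) (b J))) ↔ i ∈ J

/-! ### Classes of structures -/

/-- A class of `L`-structures (with domain in `Type 0`). -/
abbrev StructClass (L : Lang) : Type 1 := Set (Σ N : Type, L.Structure N)

/-- A class of structures is monadically stable. -/
def MonStableClass (L : Lang) (C : StructClass L) : Prop :=
  ¬ ∃ φ : (L.sum unaryLang).Formula (Fin 2),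
    ∀ n : ℕ, ∃ A ∈ C, ∃ (U : ℕ → Set A.1) (v : Fin n → A.1),
      ∀ i j : Fin n,
        (letI := A.2; letI := unaryStructure U; φ.Realize ![v i, v j]) ↔ i ≤ j

/-- A class of structures is monadically dependent. -/
def MonDepClass (L : Lang) (C : StructClass L) : Prop :=
  ¬ ∃ (m m' : ℕ) (φ : (L.sum unaryLang).Formula (Fin m ⊕ Fin m')),
    ∀ k : ℕ, ∃ A ∈ C, ∃ (U : ℕ → Set A.1) (a : Fin k → Fin m → A.1)
      (b : Finset (Fin k) → Fin m' → A.1),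
      ∀ (i : Fin k) (J : Finset (Fin k)),
        (letI := A.2; letI := unaryStructure U;
          φ.Realize (Sum.elim (a i) (b J))) ↔ i ∈ J

/-- A class of structures is existentially monadically dependent. -/
def ExistMonDepClass (L : Lang) (C : StructClass L) : Prop :=
  ¬ ∃ (m m' : ℕ) (φ : (L.sum unaryLang).Formula (Fin m ⊕ Fin m')),
    φ.IsExistential ∧
    ∀ k : ℕ, ∃ A ∈ C, ∃ (U : ℕ → Set A.1) (a : Fin k → Fin m → A.1)
      (b : Finset (Fin k) → Fin m' → A.1),
      ∀ (i : Fin k) (J : Finset (Fin k)),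
        (letI := A.2; letI := unaryStructure U;
          φ.Realize (Sum.elim (a i) (b J))) ↔ i ∈ J

/-- The partitioned formula `φ` is stable in the class `C`. -/
def StablePartFormulaClass (L : Lang) (C : StructClass L) {p q : ℕ}
    (φ : L.Formula (Fin p ⊕ Fin q)) : Prop :=
  ∃ k : ℕ, ∀ A ∈ C, ¬ ∃ (a : Fin k → Fin p → A.1) (b : Fin k → Fin q → A.1),
    ∀ i j : Fin k, (letI := A.2; φ.Realize (Sum.elim (a i) (b j))) ↔ i ≤ j

/-- A class of structures is atomic-stable. -/
def AtomicStableClass (L : Lang) (C : StructClass L) : Prop :=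
  ∀ (p q : ℕ) (φ : L.Formula (Fin p ⊕ Fin q)), φ.IsAtomic → StablePartFormulaClass L C φ

/-- The theory of a class: all sentences true in every member. -/
def Thy (L : Lang) (C : StructClass L) : Set (L.Sentence) :=
  {σ | ∀ A ∈ C, (letI := A.2; Sentence.Realize A.1 σ)}

/-- The elementary closure of a class: all models of its theory. -/
def ElemClosure (L : Lang) (C : StructClass L) : StructClass L :=
  {A | ∀ σ ∈ Thy L C, (letI := A.2; Sentence.Realize A.1 σ)}

/-- `A` is (isomorphic to) a weak substructure of `B`: the domain embeds and
relations are preserved. -/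
def IsWeakSub (L : Lang) (A B : Σ N : Type, L.Structure N) : Prop :=
  ∃ ι : A.1 → B.1, Function.Injective ι ∧
    ∀ (n : ℕ) (R : L.Relations n) (x : Fin n → A.1),
      A.2.RelMap R x → B.2.RelMap R (ι ∘ x)

/-- The monotone closure of a class of structures. -/
def MonotoneClosure (L : Lang) (C : StructClass L) : StructClass L :=
  {A | ∃ B ∈ C, IsWeakSub L A B}

/-! ### Graph containment notions -/

/-- `G` contains the complete bipartite graph `K_{t,t}` as a (not necessarily induced)
subgraph. -/
def HasBiclique {V : Type} (G : SimpleGraph V) (t : ℕ) : Prop :=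
  ∃ f : Fin t ⊕ Fin t → V, Function.Injective f ∧
    ∀ i j : Fin t, G.Adj (f (Sum.inl i)) (f (Sum.inr j))

/-- `G` contains some `≤ r`-subdivision of the complete graph `K_t` as a subgraph:
there are `t` distinct principal vertices joined by pairwise internally-disjoint paths
of length at most `r + 1` avoiding the principal vertices internally. -/
def HasSubdivClique {V : Type} (G : SimpleGraph V) (r t : ℕ) : Prop :=
  ∃ v : Fin t → V, Function.Injective v ∧
    ∃ p : ∀ i j : Fin t, G.Walk (v i) (v j),
      (∀ i j, i ≠ j → (p i j).IsPath ∧ (p i j).length ≤ r + 1) ∧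
      (∀ i j k, i ≠ j → v k ∈ (p i j).support → k = i ∨ k = j) ∧
      (∀ i j k l, i ≠ j → k ≠ l → ¬(i = k ∧ j = l) → ¬(i = l ∧ j = k) →
        ∀ x, x ∈ (p i j).support → x ∈ (p k l).support → x ∈ Set.range v)

/-! ### Separability, separation rank, flip-flatness -/

/-- The structure `(A, sA)` is `r`-separable: in every elementary extension, every
element is radius-`r` flip independent from (the image of) `A` over `A`. -/
def RSeparable (L : Lang) {A : Type} (sA : L.Structure A) (r : ℕ) : Prop :=
  ∀ (N : Type) (sN : L.Structure N) (f : @ElementaryEmbedding L A N sA sN) (a : N),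
    a ∉ Set.range f.toFun →
    FlipIndepSetStruct L sN (Set.range f.toFun) {a} (Set.range f.toFun) r

/-- `SrkLe L s r k U S` expresses `srk_r(U / S) ≤ k` (separation rank at radius `r`). -/
def SrkLe (L : Lang) {N : Type} (s : L.Structure N) (r : ℕ) :
    ℕ → Set N → Set N → Prop
  | 0, U, S => U ⊆ S
  | (k+1), U, S => U ⊆ S ∨ ∃ t : N, ∀ v ∈ U,
      SrkLe L s r k (U ∩ {u | ¬ FlipIndepStruct L s (S ∪ {t}) r v u}) (S ∪ {t})

/-- A class of structures is flip-flat. -/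
def FlipFlat (L : Lang) (C : StructClass L) : Prop :=
  ∀ r : ℕ, ∃ k : ℕ, ∃ Ub : ℕ → ℕ, (∀ m : ℕ, ∃ n : ℕ, m ≤ Ub n) ∧
    ∀ A ∈ C, ∀ X : Finset A.1, ∃ S : Finset A.1, S.card ≤ k ∧
      ∃ (L' : Lang) (s' : L'.Structure A.1),
        IsFlip L L' A.2 s' (↑S) ∧
        ∃ Y : Finset A.1, Y ⊆ X ∧ Ub X.card ≤ Y.card ∧
          ∀ a ∈ Y, ∀ b ∈ Y, a ≠ b → FarApart (gaif L' s') r a b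

end MS

/-- Transitivity of flip dependence in graphs: if `u` is not radius-`r`
flip independent of `v` over `S` and `v` is not radius-`q` flip independent of `w` over
`S`, then `u` is not radius-`(r+q)` flip independent of `w` over `S`. -/
theorem flip_dependence_transitive_graphs
    {V : Type} (H : SimpleGraph V) (S : Set V) (u v w : V) (r q : ℕ)
    (hr : 0 < r) (hq : 0 < q)
    (huv : ¬ MS.FlipIndepGraph H S r u v) (hvw : ¬ MS.FlipIndepGraph H S q v w) :
    ¬ MS.FlipIndepGraph H S (r + q) u w := by
  rintro ⟨B', hB', hfin, H', hflip, hfar⟩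
  have h1 : ¬ MS.FarApart H' r u v := fun h => huv ⟨B', hB', hfin, H', hflip, h⟩
  have h2 : ¬ MS.FarApart H' q v w := fun h => hvw ⟨B', hB', hfin, H', hflip, h⟩
  simp only [MS.FarApart, not_forall, not_lt] at h1 h2
  obtain ⟨p, hp⟩ := h1
  obtain ⟨p', hp'⟩ := h2
  have := hfar (p.append p')
  rw [SimpleGraph.Walk.length_append] at this
  omega
end

section
/- Let G ⪯ H be graphs (G an elementary substructure of H) whose edge relation E(x,y) is stable in H, and let U ⊆ V(H) ∖ V(G) be a set of vertices such that Types_E(U/G) is finite. Then there exists a finite set S ⊆ V(G) and an S-definable flip H' of H such that: (1) in H', no vertex of U has a neighbor in V(G); (2) unless there is u ∈ U adjacent in H to every vertex of G, then for all v, w ∈ V(H), if w is at distance greater than 1 from S in H, then v and w are adjacent in H iff they are adjacent in H'; (3) for every v ∈ V(H) ∖ V(G) and r ≥ 3, if dist_H(v, U) > r then dist_{H'}(v, U) > r − 2; and (4) for every v ∈ V(H) ∖ V(G) and r ≥ 1, if dist_H(v, V(G)) > r then dist_{H'}(v, V(G)) > r. -/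
open FirstOrder FirstOrder.Language

namespace NormAux

open FirstOrder FirstOrder.Language

variable {V : Type}

/-! ### Basic lemmas about atomic types -/

lemma sat_refl (H : SimpleGraph V) (S : Set V) (v : V) : MS.SameAtomicType H S v v :=
  fun _ _ => ⟨Iff.rfl, Iff.rfl⟩

lemma sat_symm {H : SimpleGraph V} {S : Set V} {u v : V}
    (h : MS.SameAtomicType H S u v) : MS.SameAtomicType H S v u :=
  fun s hs => ⟨(h s hs).1.symm, (h s hs).2.symm⟩

lemma sat_trans {H : SimpleGraph V} {S : Set V} {u v w : V}
    (h1 : MS.SameAtomicType H S u v) (h2 : MS.SameAtomicType H S v w) :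
    MS.SameAtomicType H S u w :=
  fun s hs => ⟨(h1 s hs).1.trans (h2 s hs).1, (h1 s hs).2.trans (h2 s hs).2⟩

lemma sat_mono {H : SimpleGraph V} {S S' : Set V} (hss : S' ⊆ S) {u v : V}
    (h : MS.SameAtomicType H S u v) : MS.SameAtomicType H S' u v :=
  fun s hs => h s (hss hs)

/-! ### Greedy sequences -/

lemma exists_goodList {α : Type} (Rel : List α → α → Prop)
    (h : ∀ l : List α, (∀ n (hn : n < l.length), Rel (l.take n) l[n]) → ∃ a, Rel l a) :
    ∀ N, ∃ l : List α, l.length = N ∧ ∀ n (hn : n < l.length), Rel (l.take n) l[n] := by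
  intro N
  induction N with
  | zero => exact ⟨[], rfl, fun n hn => absurd hn (by simp)⟩
  | succ N ih =>
    obtain ⟨l, hlen, hgood⟩ := ih
    obtain ⟨a, ha⟩ := h l hgood
    refine ⟨l ++ [a], by simp [hlen], ?_⟩
    intro n hn
    rcases lt_or_eq_of_le (Nat.lt_succ_iff.1 (by simpa [hlen] using hn)) with h1 | h1
    · rw [List.getElem_append_left (by omega), List.take_append_of_le_length (by omega)]
      exact hgood n (by omega)
    · rw [← h1] at hlen
      subst hlen
      rw [List.getElem_concat_length, List.take_append_of_le_length le_rfl,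
        List.take_length]
      · exact ha
      · rfl

/-! ### Ramsey -/

lemma ramsey2 : ∀ s t : ℕ, ∃ N : ℕ, ∀ (c : ℕ → ℕ → Bool) (A : Finset ℕ), N ≤ A.card →
    (∃ B ⊆ A, B.card = s ∧ ∀ i ∈ B, ∀ j ∈ B, i < j → c i j = true) ∨
    (∃ B ⊆ A, B.card = t ∧ ∀ i ∈ B, ∀ j ∈ B, i < j → c i j = false) := by
  intro s
  induction s with
  | zero =>
    intro t
    exact ⟨0, fun c A _ => Or.inl ⟨∅, Finset.empty_subset _, Finset.card_empty,
      fun i hi => absurd hi (by simp)⟩⟩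
  | succ s ihs =>
    intro t
    induction t with
    | zero =>
      exact ⟨0, fun c A _ => Or.inr ⟨∅, Finset.empty_subset _, Finset.card_empty,
        fun i hi => absurd hi (by simp)⟩⟩
    | succ t iht =>
      obtain ⟨N₁, h₁⟩ := ihs (t + 1)
      obtain ⟨N₂, h₂⟩ := iht
      refine ⟨N₁ + N₂ + 1, ?_⟩
      intro c A hcard
      have hA : A.Nonempty := Finset.card_pos.1 (by omega)
      set a := A.min' hA with ha
      set A' := A.erase a with hA'
      have hcard' : N₁ + N₂ ≤ A'.card := by
        rw [hA', Finset.card_erase_of_mem (A.min'_mem hA)]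
        omega
      classical
      set A₁ := A'.filter (fun j => c a j = true) with hA₁
      set A₂ := A'.filter (fun j => ¬ (c a j = true)) with hA₂
      have hsum : A₁.card + A₂.card = A'.card := Finset.card_filter_add_card_filter_not _
      have hlow : ∀ b ∈ A', a < b := by
        intro b hb
        have h1 : a ≤ b := A.min'_le b (Finset.mem_of_mem_erase hb)
        have h2 : b ≠ a := Finset.ne_of_mem_erase hb
        omega
      rcases le_or_gt N₁ A₁.card with hc1 | hc1
      · rcases h₁ c A₁ hc1 with ⟨B, hBsub, hBcard, hBmono⟩ | ⟨B, hBsub, hBcard, hBmono⟩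
        · left
          have haB : a ∉ B := fun h => lt_irrefl a (hlow a (Finset.mem_of_mem_filter a (hBsub h)))
          refine ⟨insert a B, ?_, ?_, ?_⟩
          · intro x hx
            rcases Finset.mem_insert.1 hx with rfl | hx
            · exact A.min'_mem hA
            · exact Finset.mem_of_mem_erase (Finset.mem_of_mem_filter x (hBsub hx))
          · rw [Finset.card_insert_of_notMem haB, hBcard]
          · intro i hi j hj hij
            rcases Finset.mem_insert.1 hi with rfl | hi
            · rcases Finset.mem_insert.1 hj with rfl | hj
              · omega
              · exact (Finset.mem_filter.1 (hBsub hj)).2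
            · rcases Finset.mem_insert.1 hj with rfl | hj
              · exact absurd (hlow i (Finset.mem_of_mem_filter i (hBsub hi))) (by omega)
              · exact hBmono i hi j hj hij
        · right
          refine ⟨B, fun x hx => Finset.mem_of_mem_erase (Finset.mem_of_mem_filter x (hBsub hx)),
            hBcard, hBmono⟩
      · have hc2 : N₂ ≤ A₂.card := by omega
        rcases h₂ c A₂ hc2 with ⟨B, hBsub, hBcard, hBmono⟩ | ⟨B, hBsub, hBcard, hBmono⟩
        · left
          refine ⟨B, fun x hx => Finset.mem_of_mem_erase (Finset.mem_of_mem_filter x (hBsub hx)),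
            hBcard, hBmono⟩
        · right
          have haB : a ∉ B := fun h => lt_irrefl a (hlow a (Finset.mem_of_mem_filter a (hBsub h)))
          refine ⟨insert a B, ?_, ?_, ?_⟩
          · intro x hx
            rcases Finset.mem_insert.1 hx with rfl | hx
            · exact A.min'_mem hA
            · exact Finset.mem_of_mem_erase (Finset.mem_of_mem_filter x (hBsub hx))
          · rw [Finset.card_insert_of_notMem haB, hBcard]
          · intro i hi j hj hij
            rcases Finset.mem_insert.1 hi with rfl | hi
            · rcases Finset.mem_insert.1 hj with rfl | hj
              · omega
              · simpa using (Finset.mem_filter.1 (hBsub hj)).2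
            · rcases Finset.mem_insert.1 hj with rfl | hj
              · exact absurd (hlow i (Finset.mem_of_mem_filter i (hBsub hi))) (by omega)
              · exact hBmono i hi j hj hij

end NormAux

namespace NormAux

open FirstOrder FirstOrder.Language

variable {V : Type}

/-! ### Finite satisfiability via elementarity -/

noncomputable def atomF (n : ℕ) (i : Fin n) : Language.graph.BoundedFormula (Fin n) 1 :=
  Language.adj.boundedFormula₂ (Term.var (Sum.inr 0)) (Term.var (Sum.inl i))

noncomputable def phiF (n : ℕ) (c : Fin n → Bool) : Language.graph.Formula (Fin n) :=
  (BoundedFormula.iInf fun i =>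
    ((if c i then atomF n i else (atomF n i).not) ⊓
      ((Term.var (Sum.inr 0)).bdEqual (Term.var (Sum.inl i))).not)).ex

lemma realize_phiF {W : Type} (G : SimpleGraph W) (n : ℕ) (c : Fin n → Bool)
    (v : Fin n → W) :
    (letI := G.structure; (phiF n c).Realize v) ↔
      ∃ a : W, ∀ i, a ≠ v i ∧ (G.Adj a (v i) ↔ c i = true) := by
  letI := G.structure
  have hrel : ∀ (a : W) i, Structure.RelMap (L := Language.graph) (M := W) Language.adj ![a, v i]
      ↔ G.Adj a (v i) := by
    intro a i
    rfl
  rw [Formula.Realize, phiF, BoundedFormula.realize_ex]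
  refine exists_congr fun a => ?_
  rw [BoundedFormula.realize_iInf]
  constructor
  · intro h i
    have := h i
    rw [BoundedFormula.realize_inf, BoundedFormula.realize_not,
      BoundedFormula.realize_bdEqual] at this
    obtain ⟨h1, h2⟩ := this
    constructor
    · intro heq
      apply h2
      simp [Term.realize_var, Fin.snoc, heq]
    · by_cases hc : c i
      · rw [if_pos hc] at h1
        rw [atomF, BoundedFormula.realize_rel₂] at h1
        simp only [Term.realize_var] at h1
        simp only [Sum.elim_inr, Sum.elim_inl, Fin.snoc] at h1
        simp only [hc, iff_true]
        simpa [hrel] using h1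
      · rw [if_neg hc] at h1
        rw [BoundedFormula.realize_not, atomF, BoundedFormula.realize_rel₂] at h1
        simp only [Term.realize_var] at h1
        simp only [Sum.elim_inr, Sum.elim_inl, Fin.snoc] at h1
        simp only [Bool.not_eq_true] at hc ⊢
        simp only [hc, iff_false]
        simpa [hrel] using h1
  · intro h i
    obtain ⟨h1, h2⟩ := h i
    rw [BoundedFormula.realize_inf, BoundedFormula.realize_not,
      BoundedFormula.realize_bdEqual]
    constructor
    · by_cases hc : c i
      · rw [if_pos hc]
        rw [atomF, BoundedFormula.realize_rel₂]
        simp only [Term.realize_var, Sum.elim_inr, Sum.elim_inl, Fin.snoc]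
        simp only [hc, iff_true] at h2
        simpa [hrel] using h2
      · rw [if_neg hc]
        rw [BoundedFormula.realize_not, atomF, BoundedFormula.realize_rel₂]
        simp only [Term.realize_var, Sum.elim_inr, Sum.elim_inl, Fin.snoc]
        simp only [Bool.not_eq_true] at hc
        simp only [hc, iff_false] at h2
        simpa [hrel] using h2
    · intro heq
      apply h1
      simp only [Term.realize_var, Sum.elim_inr, Sum.elim_inl, Fin.snoc] at heq
      simpa using heq

lemma finSat (H : SimpleGraph V) (Gs : Set V) (hGH : MS.GraphIsElemSub H Gs)
    (L : List V) (hL : ∀ x ∈ L, x ∈ Gs) (u : V) (hu : u ∉ Gs) :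
    ∃ u', u' ∈ Gs ∧ (∀ x ∈ L, u' ≠ x) ∧ ∀ x ∈ L, (H.Adj u' x ↔ H.Adj u x) := by
  classical
  set n := L.length with hn
  set g : Fin n → V := fun i => L.get i with hg
  have hgmem : ∀ i, g i ∈ Gs := fun i => hL _ (L.get_mem _)
  set c : Fin n → Bool := fun i => decide (H.Adj u (g i)) with hc
  set x : Fin n → Gs := fun i => ⟨g i, hgmem i⟩ with hx
  have hbig : (letI := H.structure; (phiF n c).Realize (fun i => ((x i : V)))) := by
    rw [realize_phiF]
    refine ⟨u, fun i => ⟨fun h => hu (h ▸ hgmem i), by simp [hc, hx]⟩⟩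
  have hsmall := (hGH n (phiF n c) x).2 hbig
  rw [realize_phiF] at hsmall
  obtain ⟨a, ha⟩ := hsmall
  refine ⟨(a : V), a.2, ?_, ?_⟩
  · intro y hy
    obtain ⟨i, hi⟩ := List.mem_iff_get.1 hy
    intro h
    exact (ha i).1 (Subtype.ext (by simp only [hx, hg]; rw [hi]; exact h))
  · intro y hy
    obtain ⟨i, hi⟩ := List.mem_iff_get.1 hy
    have h2 := (ha i).2
    rw [SimpleGraph.induce] at h2
    rw [SimpleGraph.comap_adj] at h2
    simp only [hc, decide_eq_true_eq] at h2
    rw [← hi]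
    exact h2

end NormAux

namespace NormAux

variable {V : Type}

lemma dom_lemma (H : SimpleGraph V) (Gs : Set V) (k : ℕ)
    (hk : ¬ ∃ (a : Fin k → V) (b : Fin k → V), ∀ i j : Fin k, H.Adj (a i) (b j) ↔ i ≤ j)
    (fs : ∀ (L : List V), (∀ x ∈ L, x ∈ Gs) → ∀ u : V, u ∉ Gs →
      ∃ u', u' ∈ Gs ∧ (∀ x ∈ L, u' ≠ x) ∧ ∀ x ∈ L, (H.Adj u' x ↔ H.Adj u x))
    (u : V) (hu : u ∉ Gs) :
    ∃ D : Finset V, ↑D ⊆ Gs ∧ (∀ d ∈ D, ∃ g, g ∈ Gs ∧ H.Adj u g ∧ H.Adj d g) ∧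
      ∀ g ∈ Gs, H.Adj u g → ∃ d ∈ D, H.Adj g d ∨ g = d := by
  classical
  by_contra hcon
  set Rel : List (V × V) → (V × V) → Prop := fun l p =>
    (p.1 ∈ Gs ∧ H.Adj u p.1 ∧ ∀ q ∈ l, ¬ H.Adj p.1 q.2 ∧ p.1 ≠ q.2) ∧
    (p.2 ∈ Gs ∧ H.Adj p.2 p.1 ∧ ∀ q ∈ l, H.Adj p.2 q.1) with hRel
  have step : ∀ l : List (V × V),
      (∀ n (hn : n < l.length), Rel (l.take n) l[n]) → ∃ p, Rel l p := by
    intro l hgood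
    have hmemfacts : ∀ q ∈ l, q.1 ∈ Gs ∧ H.Adj u q.1 ∧ q.2 ∈ Gs ∧ H.Adj q.2 q.1 := by
      intro q hq
      obtain ⟨n, hn, rfl⟩ := List.mem_iff_getElem.1 hq
      obtain ⟨⟨A1, A2, _⟩, ⟨B1, B2, _⟩⟩ := hgood n hn
      exact ⟨A1, A2, B1, B2⟩
    by_cases hstop : ∀ g ∈ Gs, H.Adj u g → ∃ d ∈ l.map Prod.snd, H.Adj g d ∨ g = d
    · exfalso
      apply hcon
      refine ⟨(l.map Prod.snd).toFinset, ?_, ?_, ?_⟩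
      · intro d hd
        simp only [Finset.coe_sort_coe, List.coe_toFinset, Set.mem_setOf_eq] at hd
        obtain ⟨q, hq, rfl⟩ := List.mem_map.1 hd
        exact (hmemfacts q hq).2.2.1
      · intro d hd
        obtain ⟨q, hq, rfl⟩ := List.mem_map.1 (List.mem_toFinset.1 hd)
        exact ⟨q.1, (hmemfacts q hq).1, (hmemfacts q hq).2.1, (hmemfacts q hq).2.2.2⟩
      · intro g hg hadj
        obtain ⟨d, hd, hgd⟩ := hstop g hg hadj
        exact ⟨d, List.mem_toFinset.2 hd, hgd⟩
    · push_neg at hstop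
      obtain ⟨g, hg, hadj, hbad⟩ := hstop
      obtain ⟨w, hwG, _, hwadj⟩ :=
        fs (g :: l.map Prod.fst) (by
          intro x hx
          rcases List.mem_cons.1 hx with rfl | hx
          · exact hg
          · obtain ⟨q, hq, rfl⟩ := List.mem_map.1 hx
            exact (hmemfacts q hq).1) u hu
      refine ⟨(g, w), ⟨hg, hadj, ?_⟩, hwG, ?_, ?_⟩
      · intro q hq
        exact hbad q.2 (List.mem_map_of_mem hq)
      · exact (hwadj g List.mem_cons_self).2 hadj
      · intro q hq
        exact (hwadj q.1 (List.mem_cons_of_mem _ (List.mem_map_of_mem hq))).2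
          (hmemfacts q hq).2.1
  obtain ⟨l, hlen, hgood⟩ := exists_goodList Rel step k
  apply hk
  refine ⟨fun i => (l[(i : ℕ)]'(by omega)).1, fun j => (l[(j : ℕ)]'(by omega)).2, ?_⟩
  intro i j
  rw [Fin.le_def]
  have hi : (i : ℕ) < l.length := by omega
  have hj : (j : ℕ) < l.length := by omega
  constructor
  · intro hadj
    by_contra hij
    push_neg at hij
    obtain ⟨⟨_, _, hA⟩, _⟩ := hgood (i : ℕ) hi
    have hmem : l[(j : ℕ)] ∈ l.take (i : ℕ) := by
      have : (l.take (i : ℕ))[(j : ℕ)]'(by simp [hlen]; omega) = l[(j : ℕ)] :=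
        List.getElem_take ..
      rw [← this]
      exact List.getElem_mem _
    exact (hA _ hmem).1 hadj
  · intro hij
    obtain ⟨_, ⟨_, hB1, hB2⟩⟩ := hgood (j : ℕ) hj
    rcases lt_or_eq_of_le hij with hlt | heq
    · have hmem : l[(i : ℕ)] ∈ l.take (j : ℕ) := by
        have : (l.take (j : ℕ))[(i : ℕ)]'(by simp [hlen]; omega) = l[(i : ℕ)] :=
          List.getElem_take ..
        rw [← this]
        exact List.getElem_mem _
      exact (hB2 _ hmem).symm
    · show H.Adj (l[(i : ℕ)]'hi).1 (l[(j : ℕ)]'hj).2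
      have hieq : l[(i : ℕ)]'hi = l[(j : ℕ)]'hj := by congr 1
      rw [hieq]
      exact hB1.symm

end NormAux

namespace NormAux

variable {V : Type}

lemma defin_lemma (H : SimpleGraph V) (Gs : Set V) (k : ℕ)
    (hk : ¬ ∃ (a : Fin k → V) (b : Fin k → V), ∀ i j : Fin k, H.Adj (a i) (b j) ↔ i ≤ j)
    (fs : ∀ (L : List V), (∀ x ∈ L, x ∈ Gs) → ∀ u : V, u ∉ Gs →
      ∃ u', u' ∈ Gs ∧ (∀ x ∈ L, u' ≠ x) ∧ ∀ x ∈ L, (H.Adj u' x ↔ H.Adj u x))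
    (u : V) (hu : u ∉ Gs) :
    ∃ P : Finset V, ↑P ⊆ Gs ∧ (∀ d ∈ P, ∃ g, g ∈ Gs ∧ H.Adj u g ∧ H.Adj d g) ∧
      ∀ g ∈ Gs, ∀ g' ∈ Gs, MS.SameAtomicType H ↑P g g' → (H.Adj u g ↔ H.Adj u g') := by
  classical
  by_contra hcon
  set Rel : List (V × V × V) → (V × V × V) → Prop := fun l p =>
    (p.1 ∈ Gs ∧ p.2.1 ∈ Gs ∧ H.Adj u p.1 ∧ ¬ H.Adj u p.2.1 ∧
      ∀ q ∈ l, (H.Adj p.1 q.2.2 ↔ H.Adj p.2.1 q.2.2)) ∧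
    (p.2.2 ∈ Gs ∧
      (H.Adj p.2.2 p.1 ↔ H.Adj u p.1) ∧ (H.Adj p.2.2 p.2.1 ↔ H.Adj u p.2.1) ∧
      ∀ q ∈ l, (H.Adj p.2.2 q.1 ↔ H.Adj u q.1) ∧ (H.Adj p.2.2 q.2.1 ↔ H.Adj u q.2.1))
    with hRel
  have step : ∀ l : List (V × V × V),
      (∀ n (hn : n < l.length), Rel (l.take n) l[n]) → ∃ p, Rel l p := by
    intro l hgood
    have hmemfacts : ∀ q ∈ l, q.1 ∈ Gs ∧ q.2.1 ∈ Gs ∧ q.2.2 ∈ Gs ∧ H.Adj u q.1 ∧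
        H.Adj q.2.2 q.1 := by
      intro q hq
      obtain ⟨n, hn, rfl⟩ := List.mem_iff_getElem.1 hq
      obtain ⟨⟨A1, A2, A3, _, _⟩, ⟨B1, B2, _, _⟩⟩ := hgood n hn
      exact ⟨A1, A2, B1, A3, B2.2 A3⟩
    set P : Finset V := (l.map (fun q => q.2.2)).toFinset with hP
    have hPmem : ∀ d ∈ P, ∃ q ∈ l, q.2.2 = d := by
      intro d hd
      obtain ⟨q, hq, rfl⟩ := List.mem_map.1 (List.mem_toFinset.1 hd)
      exact ⟨q, hq, rfl⟩
    by_cases hstop : ∀ g ∈ Gs, ∀ g' ∈ Gs, MS.SameAtomicType H ↑P g g' →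
        (H.Adj u g ↔ H.Adj u g')
    · exfalso
      apply hcon
      refine ⟨P, ?_, ?_, hstop⟩
      · intro d hd
        obtain ⟨q, hq, rfl⟩ := hPmem d (by simpa using hd)
        exact (hmemfacts q hq).2.2.1
      · intro d hd
        obtain ⟨q, hq, rfl⟩ := hPmem d hd
        exact ⟨q.1, (hmemfacts q hq).1, (hmemfacts q hq).2.2.2.1, (hmemfacts q hq).2.2.2.2⟩
    · push_neg at hstop
      obtain ⟨g, hg, g', hg', hsat, hne⟩ := hstop
      -- arrange that `Adj u g` and `¬ Adj u g'`
      obtain ⟨g, hg, g', hg', hsat, hadj, hnadj⟩ :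
          ∃ g, g ∈ Gs ∧ ∃ g', g' ∈ Gs ∧ MS.SameAtomicType H ↑P g g' ∧
            H.Adj u g ∧ ¬ H.Adj u g' := by
        rcases hne with ⟨h1, h2⟩ | ⟨h1, h2⟩
        · exact ⟨g, hg, g', hg', hsat, h1, h2⟩
        · exact ⟨g', hg', g, hg, sat_symm hsat, h2, h1⟩
      obtain ⟨w, hwG, _, hwadj⟩ :=
        fs (g :: g' :: (l.map (fun q => q.1) ++ l.map (fun q => q.2.1))) (by
          intro x hx
          rcases List.mem_cons.1 hx with rfl | hx
          · exact hg
          rcases List.mem_cons.1 hx with rfl | hx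
          · exact hg'
          rcases List.mem_append.1 hx with hx | hx
          · obtain ⟨q, hq, rfl⟩ := List.mem_map.1 hx
            exact (hmemfacts q hq).1
          · obtain ⟨q, hq, rfl⟩ := List.mem_map.1 hx
            exact (hmemfacts q hq).2.1) u hu
      refine ⟨(g, g', w), ⟨hg, hg', hadj, hnadj, ?_⟩, hwG, ?_, ?_, ?_⟩
      · intro q hq
        have hqP : q.2.2 ∈ (↑P : Set V) := by
          simp only [hP, Finset.coe_sort_coe, List.coe_toFinset, Set.mem_setOf_eq]
          exact List.mem_map.2 ⟨q, hq, rfl⟩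
        exact (hsat q.2.2 hqP).2
      · exact hwadj g List.mem_cons_self
      · exact hwadj g' (List.mem_cons_of_mem _ List.mem_cons_self)
      · intro q hq
        constructor
        · exact hwadj q.1 (List.mem_cons_of_mem _ (List.mem_cons_of_mem _
            (List.mem_append_left _ (List.mem_map_of_mem hq))))
        · exact hwadj q.2.1 (List.mem_cons_of_mem _ (List.mem_cons_of_mem _
            (List.mem_append_right _ (List.mem_map_of_mem hq))))
  obtain ⟨N, hN⟩ := ramsey2 (k + 1) (k + 1)
  obtain ⟨l, hlen, hgood⟩ := exists_goodList Rel step N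
  -- the key adjacency facts
  have F1 : ∀ (i j : ℕ) (hi : i < l.length) (hj : j < l.length), j ≤ i →
      H.Adj (l[i]'hi).2.2 ((l[j]'hj).1) ∧ ¬ H.Adj (l[i]'hi).2.2 ((l[j]'hj).2.1) := by
    intro i j hi hj hji
    obtain ⟨⟨_, _, hAg, hAg', _⟩, ⟨_, hB1, hB2, hB3⟩⟩ := hgood i hi
    rcases lt_or_eq_of_le hji with hlt | heq
    · have hmem : l[j] ∈ l.take i := by
        have : (l.take i)[j]'(by simp; omega) = l[j] := List.getElem_take ..
        rw [← this]; exact List.getElem_mem _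
      obtain ⟨C1, C2⟩ := hB3 _ hmem
      obtain ⟨⟨_, _, hDg, hDg', _⟩, _⟩ := hgood j hj
      exact ⟨C1.2 hDg, fun h => hDg' (C2.1 h)⟩
    · subst heq
      exact ⟨hB1.2 hAg, fun h => hAg' (hB2.1 h)⟩
  have F2 : ∀ (i j : ℕ) (hi : i < l.length) (hj : j < l.length), i < j →
      (H.Adj (l[i]'hi).2.2 ((l[j]'hj).1) ↔ H.Adj (l[i]'hi).2.2 ((l[j]'hj).2.1)) := by
    intro i j hi hj hij
    obtain ⟨⟨_, _, _, _, hA⟩, _⟩ := hgood j hj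
    have hmem : l[i] ∈ l.take j := by
      have : (l.take j)[i]'(by simp; omega) = l[i] := List.getElem_take ..
      rw [← this]; exact List.getElem_mem _
    have := hA _ hmem
    exact ⟨fun h => (this.1 h.symm).symm, fun h => (this.2 h.symm).symm⟩
  set c : ℕ → ℕ → Bool := fun i j =>
    @decide (∀ (hi : i < l.length) (hj : j < l.length),
      H.Adj (l[i]'hi).2.2 ((l[j]'hj).1)) (Classical.propDecidable _) with hc
  have hcspec : ∀ (i j : ℕ) (hi : i < l.length) (hj : j < l.length),
      c i j = true ↔ H.Adj (l[i]'hi).2.2 ((l[j]'hj).1) := by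
    intro i j hi hj
    simp only [hc]
    constructor
    · intro h
      exact (@of_decide_eq_true _ (Classical.propDecidable _) h) hi hj
    · intro h
      exact @decide_eq_true _ (Classical.propDecidable _) (fun _ _ => h)
  have hcard : N ≤ (Finset.range N).card := by simp
  rcases hN c (Finset.range N) hcard with ⟨B, hBsub, hBcard, hmono⟩ | ⟨B, hBsub, hBcard, hmono⟩
  · -- all upper entries true: use the g' columns
    set m := B.orderEmbOfFin hBcard with hm
    have hmB : ∀ i, m i ∈ B := fun i => B.orderEmbOfFin_mem hBcard i
    have hmlt : ∀ i : Fin (k + 1), (m i : ℕ) < l.length := by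
      intro i
      rw [hlen]
      exact Finset.mem_range.1 (hBsub (hmB i))
    apply hk
    refine ⟨fun i => (l[m i.castSucc]'(hmlt _)).2.2,
            fun j => (l[m j.succ]'(hmlt _)).2.1, ?_⟩
    intro i j
    rw [Fin.le_def]
    constructor
    · intro hadj
      by_contra hij
      push_neg at hij
      have hle : m j.succ ≤ m i.castSucc := m.le_iff_le.2 (by
        rw [Fin.le_def]
        simp only [Fin.val_succ, Fin.coe_castSucc]
        omega)
      exact (F1 _ _ (hmlt _) (hmlt _) hle).2 hadj
    · intro hij
      have hlt : m i.castSucc < m j.succ := m.lt_iff_lt.2 (by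
        rw [Fin.lt_def]
        simp only [Fin.val_succ, Fin.coe_castSucc]
        omega)
      have hctrue := hmono _ (hmB i.castSucc) _ (hmB j.succ) hlt
      have hadjg := (hcspec _ _ (hmlt _) (hmlt _)).1 hctrue
      exact (F2 _ _ (hmlt _) (hmlt _) hlt).1 hadjg
  · -- all upper entries false: use the g rows against w columns
    set m := B.orderEmbOfFin hBcard with hm
    have hmB : ∀ i, m i ∈ B := fun i => B.orderEmbOfFin_mem hBcard i
    have hmlt : ∀ i : Fin (k + 1), (m i : ℕ) < l.length := by
      intro i
      rw [hlen]
      exact Finset.mem_range.1 (hBsub (hmB i))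
    apply hk
    refine ⟨fun i => (l[m i.castSucc]'(hmlt _)).1,
            fun j => (l[m j.castSucc]'(hmlt _)).2.2, ?_⟩
    intro i j
    rw [Fin.le_def]
    constructor
    · intro hadj
      by_contra hij
      push_neg at hij
      have hlt : m j.castSucc < m i.castSucc := m.lt_iff_lt.2 (by
        rw [Fin.lt_def]
        simp only [Fin.coe_castSucc]
        omega)
      have hcfalse := hmono _ (hmB j.castSucc) _ (hmB i.castSucc) hlt
      have : ¬ H.Adj (l[m j.castSucc]'(hmlt _)).2.2 ((l[m i.castSucc]'(hmlt _)).1) := by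
        intro h
        rw [← hcspec _ _ (hmlt _) (hmlt _)] at h
        rw [hcfalse] at h
        exact Bool.false_ne_true h
      exact this hadj.symm
    · intro hij
      have hle : m i.castSucc ≤ m j.castSucc := m.le_iff_le.2 (by
        rw [Fin.le_def]
        simp only [Fin.coe_castSucc]
        omega)
      exact ((F1 _ _ (hmlt _) (hmlt _) hle).1).symm

end NormAux

namespace NormAux

variable {V : Type}

lemma symm_lemma (H : SimpleGraph V) (Gs : Set V) (k : ℕ)
    (hk : ¬ ∃ (a : Fin k → V) (b : Fin k → V), ∀ i j : Fin k, H.Adj (a i) (b j) ↔ i ≤ j)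
    (fs : ∀ (L : List V), (∀ x ∈ L, x ∈ Gs) → ∀ u : V, u ∉ Gs →
      ∃ u', u' ∈ Gs ∧ (∀ x ∈ L, u' ≠ x) ∧ ∀ x ∈ L, (H.Adj u' x ↔ H.Adj u x))
    (S : Set V) (hSfin : S.Finite) (hSG : S ⊆ Gs)
    (u x : V) (hu : u ∉ Gs) (hx : x ∉ Gs)
    (hPau : ∀ g ∈ Gs, ∀ g' ∈ Gs, MS.SameAtomicType H S g g' → (H.Adj u g ↔ H.Adj u g'))
    (hPax : ∀ g ∈ Gs, ∀ g' ∈ Gs, MS.SameAtomicType H S g g' → (H.Adj x g ↔ H.Adj x g'))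
    (g g₀ : V) (hg : g ∈ Gs) (hg₀ : g₀ ∈ Gs)
    (h1 : MS.SameAtomicType H S u g) (h2 : MS.SameAtomicType H S x g₀)
    (h3 : H.Adj u g₀) : H.Adj x g := by
  classical
  by_contra h4
  set LS : List V := hSfin.toFinset.toList with hLS
  have hLSmem : ∀ s, s ∈ LS ↔ s ∈ S := by
    intro s
    rw [hLS, Finset.mem_toList, Set.Finite.mem_toFinset]
  have hgne : ∀ s ∈ S, g ≠ s := by
    intro s hs heq
    have := (h1 s hs).1
    exact hu (hSG (this.2 heq ▸ hs))
  have hg₀ne : ∀ s ∈ S, g₀ ≠ s := by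
    intro s hs heq
    have := (h2 s hs).1
    exact hx (hSG (this.2 heq ▸ hs))
  -- any member of Gs matching u's adjacencies on S has the same atomic type as g over S
  have hsat_of_u : ∀ a : V, (∀ s ∈ S, a ≠ s) → (∀ s ∈ S, (H.Adj a s ↔ H.Adj u s)) →
      MS.SameAtomicType H S a g := by
    intro a hne hadj s hs
    exact ⟨⟨fun h => absurd h (hne s hs), fun h => absurd h (hgne s hs)⟩,
      (hadj s hs).trans (h1 s hs).2⟩
  have hsat_of_x : ∀ a : V, (∀ s ∈ S, a ≠ s) → (∀ s ∈ S, (H.Adj a s ↔ H.Adj x s)) →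
      MS.SameAtomicType H S a g₀ := by
    intro a hne hadj s hs
    exact ⟨⟨fun h => absurd h (hne s hs), fun h => absurd h (hg₀ne s hs)⟩,
      (hadj s hs).trans (h2 s hs).2⟩
  set Rel : List (V × V) → (V × V) → Prop := fun l p =>
    (p.1 ∈ Gs ∧ MS.SameAtomicType H S p.1 g ∧ (∀ q ∈ l, H.Adj p.1 q.2)) ∧
    (p.2 ∈ Gs ∧ MS.SameAtomicType H S p.2 g₀ ∧ (∀ q ∈ l, ¬ H.Adj p.2 q.1) ∧
      ¬ H.Adj p.2 p.1) with hRel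
  have step : ∀ l : List (V × V),
      (∀ n (hn : n < l.length), Rel (l.take n) l[n]) → ∃ p, Rel l p := by
    intro l hgood
    have hmemfacts : ∀ q ∈ l, q.1 ∈ Gs ∧ MS.SameAtomicType H S q.1 g ∧ q.2 ∈ Gs ∧
        MS.SameAtomicType H S q.2 g₀ := by
      intro q hq
      obtain ⟨n, hn, rfl⟩ := List.mem_iff_getElem.1 hq
      obtain ⟨⟨A1, A2, _⟩, ⟨B1, B2, _⟩⟩ := hgood n hn
      exact ⟨A1, A2, B1, B2⟩
    obtain ⟨a, haG, hane, haadj⟩ :=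
      fs (LS ++ l.map Prod.snd) (by
        intro y hy
        rcases List.mem_append.1 hy with hy | hy
        · exact hSG ((hLSmem y).1 hy)
        · obtain ⟨q, hq, rfl⟩ := List.mem_map.1 hy
          exact (hmemfacts q hq).2.2.1) u hu
    have hasat : MS.SameAtomicType H S a g :=
      hsat_of_u a (fun s hs => hane s (List.mem_append_left _ ((hLSmem s).2 hs)))
        (fun s hs => haadj s (List.mem_append_left _ ((hLSmem s).2 hs)))
    obtain ⟨b, hbG, hbne, hbadj⟩ :=
      fs (LS ++ (a :: l.map Prod.fst)) (by
        intro y hy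
        rcases List.mem_append.1 hy with hy | hy
        · exact hSG ((hLSmem y).1 hy)
        rcases List.mem_cons.1 hy with rfl | hy
        · exact haG
        · obtain ⟨q, hq, rfl⟩ := List.mem_map.1 hy
          exact (hmemfacts q hq).1) x hx
    have hbsat : MS.SameAtomicType H S b g₀ :=
      hsat_of_x b (fun s hs => hbne s (List.mem_append_left _ ((hLSmem s).2 hs)))
        (fun s hs => hbadj s (List.mem_append_left _ ((hLSmem s).2 hs)))
    refine ⟨(a, b), ⟨haG, hasat, ?_⟩, hbG, hbsat, ?_, ?_⟩
    · -- a is adjacent to all previous b's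
      intro q hq
      have hq2 := hmemfacts q hq
      have : H.Adj u q.2 := by
        have := hPau g₀ hg₀ q.2 hq2.2.2.1 (sat_symm hq2.2.2.2)
        exact this.1 h3
      exact (haadj q.2 (List.mem_append_right _ (List.mem_map_of_mem hq))).2 this
    · -- b is not adjacent to any previous a
      intro q hq
      have hq1 := hmemfacts q hq
      have : ¬ H.Adj x q.1 := by
        intro h
        exact h4 ((hPax q.1 hq1.1 g hg hq1.2.1 ).1 h)
      intro h
      exact this ((hbadj q.1 (List.mem_append_right _
        (List.mem_cons_of_mem _ (List.mem_map_of_mem hq)))).1 h)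
    · -- b is not adjacent to a
      have : ¬ H.Adj x a := by
        intro h
        exact h4 ((hPax a haG g hg hasat).1 h)
      intro h
      exact this ((hbadj a (List.mem_append_right _ List.mem_cons_self)).1 h)
  obtain ⟨l, hlen, hgood⟩ := exists_goodList Rel step (k + 1)
  apply hk
  refine ⟨fun i => (l[(i : ℕ)]'(by omega)).2, fun j => (l[(j : ℕ) + 1]'(by omega)).1, ?_⟩
  intro i j
  rw [Fin.le_def]
  have hi : (i : ℕ) < l.length := by omega
  have hj : (j : ℕ) + 1 < l.length := by omega
  constructor
  · intro hadj
    by_contra hij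
    push_neg at hij
    -- then j + 1 ≤ i, so b_i is not adjacent to a_{j+1}
    obtain ⟨_, ⟨_, _, hB, hB2⟩⟩ := hgood (i : ℕ) hi
    rcases lt_or_eq_of_le (Nat.succ_le_of_lt hij) with hlt | heq
    · have hmem : l[(j : ℕ) + 1] ∈ l.take (i : ℕ) := by
        have : (l.take (i : ℕ))[(j : ℕ) + 1]'(by simp; omega) = l[(j : ℕ) + 1] :=
          List.getElem_take ..
        rw [← this]; exact List.getElem_mem _
      exact (hB _ hmem) hadj
    · have hieq : l[(i : ℕ)]'hi = l[(j : ℕ) + 1]'hj := by congr 1; omega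
      apply hB2
      have hadj' : H.Adj (l[(i : ℕ)]'hi).2 ((l[(j : ℕ) + 1]'hj).1) := hadj
      rw [← hieq] at hadj'
      exact hadj'
  · intro hij
    -- i ≤ j, so i < j + 1, and a_{j+1} is adjacent to b_i
    obtain ⟨⟨_, _, hA⟩, _⟩ := hgood ((j : ℕ) + 1) hj
    have hmem : l[(i : ℕ)] ∈ l.take ((j : ℕ) + 1) := by
      have : (l.take ((j : ℕ) + 1))[(i : ℕ)]'(by simp; omega) = l[(i : ℕ)] :=
        List.getElem_take ..
      rw [← this]; exact List.getElem_mem _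
    exact (hA _ hmem).symm

end NormAux

namespace NormAux

variable {V : Type}

lemma assemble (H : SimpleGraph V) (Gs U S : Set V)
    (hSG : S ⊆ Gs)
    (hPa : ∀ u ∈ U, ∀ g ∈ Gs, ∀ g' ∈ Gs, MS.SameAtomicType H S g g' →
      (H.Adj u g ↔ H.Adj u g'))
    (hPb : ∀ u ∈ U, ∀ u' ∈ U, MS.SameAtomicType H S u u' →
      ∀ g ∈ Gs, (H.Adj u g ↔ H.Adj u' g))
    (hPc : ∀ u ∈ U, ∀ g ∈ Gs, H.Adj u g → ∃ s ∈ S, H.Adj g s ∨ g = s)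
    (hPd : ∀ u ∈ U, (∃ g ∈ Gs, H.Adj u g) → ∃ s ∈ S, H.Adj u s)
    (hPe : ∀ s ∈ S, ∃ y ∈ U, ∃ p : H.Walk s y, p.length ≤ 2)
    (hsym : ∀ u' ∈ U, ∀ x ∈ U, ∀ g ∈ Gs, ∀ g₀ ∈ Gs,
      MS.SameAtomicType H S u' g → MS.SameAtomicType H S x g₀ →
      H.Adj u' g₀ → H.Adj x g) :
    ∃ H' : SimpleGraph V, MS.IsDefFlip H H' S ∧
        (∀ x ∈ U, ∀ g ∈ Gs, ¬ H'.Adj x g) ∧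
        ((¬ ∃ x ∈ U, ∀ g ∈ Gs, H.Adj x g) →
          ∀ a w : V, (w ∉ S ∧ ∀ t ∈ S, ¬ H.Adj w t) → (H.Adj a w ↔ H'.Adj a w)) ∧
        (∀ a : V, a ∉ Gs → ∀ r : ℕ, 3 ≤ r →
          (∀ x ∈ U, MS.FarApart H r a x) → ∀ x ∈ U, MS.FarApart H' (r - 2) a x) ∧
        (∀ a : V, a ∉ Gs → ∀ r : ℕ, 1 ≤ r →
          (∀ g ∈ Gs, MS.FarApart H r a g) → ∀ g ∈ Gs, MS.FarApart H' r a g) := by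
  classical
  set flip : V → V → Prop := fun a b => ∃ u₀ h₀, u₀ ∈ U ∧ h₀ ∈ Gs ∧ H.Adj u₀ h₀ ∧
    ((MS.SameAtomicType H S a u₀ ∧ MS.SameAtomicType H S b h₀) ∨
     (MS.SameAtomicType H S b u₀ ∧ MS.SameAtomicType H S a h₀)) with hflipdef
  have flip_comm : ∀ a b, flip a b ↔ flip b a := by
    have : ∀ a b, flip a b → flip b a := by
      rintro a b ⟨u₀, h₀, h1, h2, h3, h4 | h4⟩
      · exact ⟨u₀, h₀, h1, h2, h3, Or.inr h4⟩
      · exact ⟨u₀, h₀, h1, h2, h3, Or.inl h4⟩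
    exact fun a b => ⟨this a b, this b a⟩
  have flip_symm2 : Symmetric (fun a b => a ≠ b ∧ ¬(H.Adj a b ↔ flip a b)) := by
    intro a b hab
    exact ⟨Ne.symm hab.1, fun h => hab.2 (by rw [H.adj_comm, flip_comm]; exact h)⟩
  have flip_loopless : Irreflexive (fun a b => a ≠ b ∧ ¬(H.Adj a b ↔ flip a b)) :=
    fun a h => h.1 rfl
  set H' : SimpleGraph V :=
    ⟨fun a b => a ≠ b ∧ ¬(H.Adj a b ↔ flip a b), ⟨flip_symm2⟩, ⟨flip_loopless⟩⟩ with hH'def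
  have hH'adj : ∀ a b : V, H'.Adj a b ↔ (a ≠ b ∧ ¬(H.Adj a b ↔ flip a b)) :=
    fun a b => Iff.rfl
  have hchange : ∀ a b : V, a ≠ b → ((H.Adj a b ↔ H'.Adj a b) ↔ ¬ flip a b) := by
    intro a b hne
    rw [hH'adj]
    constructor
    · intro h1 hf
      by_cases hA : H.Adj a b
      · exact (h1.1 hA).2 (iff_of_true hA hf)
      · exact hA (h1.2 ⟨hne, fun hiff => hA (hiff.2 hf)⟩)
    · intro hnf
      constructor
      · intro hA
        exact ⟨hne, fun hiff => hnf (hiff.1 hA)⟩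
      · rintro ⟨-, hniff⟩
        by_contra hA
        exact hniff ⟨fun h => absurd h hA, fun hf => absurd hf hnf⟩
  -- endpoints of flipped pairs are close to S
  have hNS : ∀ a b, flip a b →
      (∃ s ∈ S, a = s ∨ H.Adj a s) ∧ (∃ s ∈ S, b = s ∨ H.Adj b s) := by
    rintro a b ⟨u₀, h₀, hu₀, hh₀, hadj, hcase⟩
    have hUside : ∀ c, MS.SameAtomicType H S c u₀ → ∃ s ∈ S, c = s ∨ H.Adj c s := by
      intro c hc
      obtain ⟨s, hsS, hus⟩ := hPd u₀ hu₀ ⟨h₀, hh₀, hadj⟩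
      exact ⟨s, hsS, Or.inr ((hc s hsS).2.2 hus)⟩
    have hGside : ∀ c, MS.SameAtomicType H S c h₀ → ∃ s ∈ S, c = s ∨ H.Adj c s := by
      intro c hc
      obtain ⟨s, hsS, hgs⟩ := hPc u₀ hu₀ h₀ hh₀ hadj
      rcases hgs with hadj2 | heq
      · exact ⟨s, hsS, Or.inr ((hc s hsS).2.2 hadj2)⟩
      · exact ⟨s, hsS, Or.inl ((hc s hsS).1.2 heq)⟩
    rcases hcase with ⟨c1, c2⟩ | ⟨c1, c2⟩
    · exact ⟨hUside a c1, hGside b c2⟩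
    · exact ⟨hGside a c2, hUside b c1⟩
  -- flipping is exact on U × Gs pairs
  have hflipU : ∀ x ∈ U, ∀ g ∈ Gs, (flip x g ↔ H.Adj x g) := by
    intro x hxU g hgG
    constructor
    · rintro ⟨u₀, h₀, hu₀, hh₀, hadj, hcase⟩
      rcases hcase with ⟨s1, s2⟩ | ⟨s1, s2⟩
      · have e1 : H.Adj x h₀ ↔ H.Adj u₀ h₀ := hPb x hxU u₀ hu₀ s1 h₀ hh₀
        have e2 : H.Adj x g ↔ H.Adj x h₀ := hPa x hxU g hgG h₀ hh₀ s2
        exact e2.2 (e1.2 hadj)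
      · exact hsym u₀ hu₀ x hxU g hgG h₀ hh₀ (NormAux.sat_symm s1) s2 hadj
    · intro h
      exact ⟨x, g, hxU, hgG, h, Or.inl ⟨NormAux.sat_refl H S x, NormAux.sat_refl H S g⟩⟩
  -- walk surgery
  have htrans : ∀ (a c : V) (p : H'.Walk a c),
      (∃ q : H.Walk a c, q.length ≤ p.length) ∨
      (∃ v, (∃ s ∈ S, v = s ∨ H.Adj v s) ∧ ∃ q : H.Walk a v, q.length + 1 ≤ p.length) := by
    intro a c p
    induction p with
    | nil => exact Or.inl ⟨SimpleGraph.Walk.nil, le_rfl⟩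
    | @cons a b c h' p ih =>
      by_cases hA : H.Adj a b
      · rcases ih with ⟨q, hq⟩ | ⟨v, hv, q, hq⟩
        · refine Or.inl ⟨SimpleGraph.Walk.cons hA q, ?_⟩
          rw [SimpleGraph.Walk.length_cons, SimpleGraph.Walk.length_cons]
          omega
        · refine Or.inr ⟨v, hv, SimpleGraph.Walk.cons hA q, ?_⟩
          rw [SimpleGraph.Walk.length_cons, SimpleGraph.Walk.length_cons]
          omega
      · have hf : flip a b := by
          by_contra hnf
          exact ((hH'adj a b).1 h').2 ⟨fun h => absurd h hA, fun h => absurd h hnf⟩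
        refine Or.inr ⟨a, (hNS a b hf).1, SimpleGraph.Walk.nil, ?_⟩
        rw [SimpleGraph.Walk.length_cons, SimpleGraph.Walk.length_nil]
        omega
  refine ⟨H', ?_, ?_, ?_, ?_, ?_⟩
  · -- IsDefFlip
    intro a b a' b' hne hne' hsa hsb
    rw [hchange a b hne, hchange a' b' hne']
    have hiff : flip a b ↔ flip a' b' := by
      constructor
      · rintro ⟨u₀, h₀, h1, h2, h3, ⟨c1, c2⟩ | ⟨c1, c2⟩⟩
        · exact ⟨u₀, h₀, h1, h2, h3, Or.inl ⟨NormAux.sat_trans (NormAux.sat_symm hsa) c1,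
            NormAux.sat_trans (NormAux.sat_symm hsb) c2⟩⟩
        · exact ⟨u₀, h₀, h1, h2, h3, Or.inr ⟨NormAux.sat_trans (NormAux.sat_symm hsb) c1,
            NormAux.sat_trans (NormAux.sat_symm hsa) c2⟩⟩
      · rintro ⟨u₀, h₀, h1, h2, h3, ⟨c1, c2⟩ | ⟨c1, c2⟩⟩
        · exact ⟨u₀, h₀, h1, h2, h3, Or.inl ⟨NormAux.sat_trans hsa c1,
            NormAux.sat_trans hsb c2⟩⟩
        · exact ⟨u₀, h₀, h1, h2, h3, Or.inr ⟨NormAux.sat_trans hsb c1,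
            NormAux.sat_trans hsa c2⟩⟩
    rw [hiff]
  · -- (1)
    intro x hxU g hgG h
    exact ((hH'adj x g).1 h).2 ((hflipU x hxU g hgG).symm)
  · -- (2)
    intro _ a w hw
    obtain ⟨hwS, hwadj⟩ := hw
    have hnf : ¬ flip a w := by
      intro hf
      obtain ⟨s, hsS, hcase⟩ := (hNS a w hf).2
      rcases hcase with heq | hadj
      · exact hwS (heq ▸ hsS)
      · exact hwadj s hsS hadj
    rw [hH'adj]
    constructor
    · intro h
      exact ⟨h.ne, fun hiff => hnf (hiff.1 h)⟩
    · rintro ⟨hne, hiff⟩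
      by_contra hA
      exact hiff ⟨fun h => absurd h hA, fun hf => absurd hf hnf⟩
  · -- (3)
    intro a haG r hr hfar x hxU p
    by_contra hpl
    push_neg at hpl
    rcases htrans a x p with ⟨q, hq⟩ | ⟨v, ⟨s, hsS, hvs⟩, q, hq⟩
    · have := hfar x hxU q
      omega
    · obtain ⟨y, hyU, w2, hw2⟩ := hPe s hsS
      rcases hvs with rfl | hadj
      · have htot := hfar y hyU (q.append w2)
        rw [SimpleGraph.Walk.length_append] at htot
        omega
      · have htot := hfar y hyU (q.append (SimpleGraph.Walk.cons hadj w2))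
        rw [SimpleGraph.Walk.length_append, SimpleGraph.Walk.length_cons] at htot
        omega
  · -- (4)
    intro a haG r hr hfar g hgG p
    by_contra hpl
    push_neg at hpl
    rcases htrans a g p with ⟨q, hq⟩ | ⟨v, ⟨s, hsS, hvs⟩, q, hq⟩
    · have := hfar g hgG q
      omega
    · rcases hvs with rfl | hadj
      · have := hfar v (hSG hsS) q
        omega
      · have := hfar s (hSG hsS) (q.concat hadj)
        rw [SimpleGraph.Walk.length_concat] at this
        omega

end NormAux

/-- Let `G ⪯ H` be graphs with stable edge relation and `U ⊆ V(H)∖V(G)`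
with finitely many neighbourhood traces on `G`.  Then some `S`-definable flip `H'`
(`S ⊆ V(G)` finite) satisfies: (1) no vertex of `U` has an `H'`-neighbour in `V(G)`;
(2) unless some `u ∈ U` is `H`-adjacent to all of `V(G)`, edges at vertices at
`H`-distance `> 1` from `S` are unchanged; (3) vertices of `V(H) ∖ V(G)` at `H`-distance
`> r ≥ 3` from `U` stay at distance `> r - 2`; (4) vertices of `V(H) ∖ V(G)` at
`H`-distance `> r ≥ 1` from `V(G)` stay at distance `> r`. -/
theorem normality_sublemma_graphs
    {V : Type} (H : SimpleGraph V) (Gs : Set V)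
    (hGH : MS.GraphIsElemSub H Gs)
    (hstable : ∃ k : ℕ, ¬ ∃ (a : Fin k → V) (b : Fin k → V),
      ∀ i j : Fin k, H.Adj (a i) (b j) ↔ i ≤ j)
    (U : Set V) (hU : ∀ x ∈ U, x ∉ Gs)
    (htypes : Set.Finite ((fun x => {g : V | g ∈ Gs ∧ H.Adj x g}) '' U)) :
    ∃ S : Set V, S ⊆ Gs ∧ S.Finite ∧
      ∃ H' : SimpleGraph V, MS.IsDefFlip H H' S ∧
        (∀ x ∈ U, ∀ g ∈ Gs, ¬ H'.Adj x g) ∧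
        ((¬ ∃ x ∈ U, ∀ g ∈ Gs, H.Adj x g) →
          ∀ a w : V, (w ∉ S ∧ ∀ t ∈ S, ¬ H.Adj w t) → (H.Adj a w ↔ H'.Adj a w)) ∧
        (∀ a : V, a ∉ Gs → ∀ r : ℕ, 3 ≤ r →
          (∀ x ∈ U, MS.FarApart H r a x) → ∀ x ∈ U, MS.FarApart H' (r - 2) a x) ∧
        (∀ a : V, a ∉ Gs → ∀ r : ℕ, 1 ≤ r →
          (∀ g ∈ Gs, MS.FarApart H r a g) → ∀ g ∈ Gs, MS.FarApart H' r a g) := by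
  classical
  obtain ⟨k, hk⟩ := hstable
  rcases Set.eq_empty_or_nonempty U with hUe | ⟨ustar, hustar⟩
  · refine ⟨∅, Set.empty_subset _, Set.finite_empty, H,
      fun _ _ _ _ _ _ _ _ => iff_of_true Iff.rfl Iff.rfl, ?_, ?_, ?_, ?_⟩
    · intro x hx
      rw [hUe] at hx
      exact absurd hx (Set.notMem_empty x)
    · exact fun _ _ _ _ => Iff.rfl
    · intro a _ r _ _ x hx
      rw [hUe] at hx
      exact absurd hx (Set.notMem_empty x)
    · exact fun a _ r _ hfar g hg => hfar g hg
  have fs : ∀ (L : List V), (∀ x ∈ L, x ∈ Gs) → ∀ u : V, u ∉ Gs →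
      ∃ u', u' ∈ Gs ∧ (∀ x ∈ L, u' ≠ x) ∧ ∀ x ∈ L, (H.Adj u' x ↔ H.Adj u x) :=
    fun L hL u hu => NormAux.finSat H Gs hGH L hL u hu
  set 𝒮 : Set (Set V) := (fun x => {g : V | g ∈ Gs ∧ H.Adj x g}) '' U with h𝒮
  -- per-trace finite sets
  have hperT : ∀ T ∈ 𝒮, ∃ F : Finset V, ↑F ⊆ Gs ∧
      (∀ d ∈ F, ∃ y ∈ U, ∃ p : H.Walk d y, p.length ≤ 2) ∧
      (∀ u ∈ U, {g : V | g ∈ Gs ∧ H.Adj u g} = T →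
        ((∀ g ∈ Gs, ∀ g' ∈ Gs, MS.SameAtomicType H ↑F g g' → (H.Adj u g ↔ H.Adj u g')) ∧
         (∀ g ∈ Gs, H.Adj u g → ∃ s ∈ F, H.Adj g s ∨ g = s) ∧
         ((∃ g ∈ Gs, H.Adj u g) → ∃ s ∈ F, H.Adj u s))) := by
    intro T hT
    obtain ⟨u₀, hu₀U, hu₀T⟩ := hT
    have hu₀G : u₀ ∉ Gs := hU u₀ hu₀U
    obtain ⟨P, hPG, hPnear, hPdef⟩ := NormAux.defin_lemma H Gs k hk fs u₀ hu₀G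
    obtain ⟨D, hDG, hDnear, hDdom⟩ := NormAux.dom_lemma H Gs k hk fs u₀ hu₀G
    obtain ⟨E, hEG, hEnear, hErep⟩ : ∃ E : Finset V, ↑E ⊆ Gs ∧
        (∀ d ∈ E, ∃ y ∈ U, ∃ p : H.Walk d y, p.length ≤ 2) ∧
        ((∃ g ∈ Gs, H.Adj u₀ g) → ∃ s ∈ E, H.Adj u₀ s) := by
      by_cases hne : ∃ g ∈ Gs, H.Adj u₀ g
      · obtain ⟨t, htG, htadj⟩ := hne
        refine ⟨{t}, by simp [htG], ?_, fun _ => ⟨t, Finset.mem_singleton_self t, htadj⟩⟩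
        intro d hd
        rw [Finset.mem_singleton] at hd
        subst hd
        exact ⟨u₀, hu₀U, SimpleGraph.Walk.cons htadj.symm SimpleGraph.Walk.nil, by simp⟩
      · exact ⟨∅, by simp, by simp, fun h => absurd h hne⟩
    refine ⟨P ∪ D ∪ E, ?_, ?_, ?_⟩
    · intro s hs
      rcases Finset.mem_union.1 (by exact_mod_cast hs) with hs' | hs'
      · rcases Finset.mem_union.1 hs' with hs'' | hs''
        · exact hPG (Finset.mem_coe.2 hs'')
        · exact hDG (Finset.mem_coe.2 hs'')
      · exact hEG (Finset.mem_coe.2 hs')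
    · intro d hd
      rcases Finset.mem_union.1 hd with hd' | hd'
      · rcases Finset.mem_union.1 hd' with hd'' | hd''
        · obtain ⟨g, hgG, hug, hdg⟩ := hPnear d hd''
          exact ⟨u₀, hu₀U, SimpleGraph.Walk.cons hdg (SimpleGraph.Walk.cons hug.symm
            SimpleGraph.Walk.nil), by simp⟩
        · obtain ⟨g, hgG, hug, hdg⟩ := hDnear d hd''
          exact ⟨u₀, hu₀U, SimpleGraph.Walk.cons hdg (SimpleGraph.Walk.cons hug.symm
            SimpleGraph.Walk.nil), by simp⟩
      · exact hEnear d hd'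
    · intro u huU htrace
      have hu₀T' : {g : V | g ∈ Gs ∧ H.Adj u₀ g} = T := hu₀T
      have htr : ∀ g ∈ Gs, (H.Adj u g ↔ H.Adj u₀ g) := by
        intro g hgG
        have h1 : g ∈ {g : V | g ∈ Gs ∧ H.Adj u g} ↔ g ∈ {g : V | g ∈ Gs ∧ H.Adj u₀ g} := by
          rw [htrace, ← hu₀T']
        simp only [Set.mem_setOf_eq] at h1
        constructor
        · intro h
          exact (h1.1 ⟨hgG, h⟩).2
        · intro h
          exact (h1.2 ⟨hgG, h⟩).2
      refine ⟨?_, ?_, ?_⟩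
      · intro g hgG g' hg'G hsat
        have hsat' : MS.SameAtomicType H ↑P g g' :=
          NormAux.sat_mono (by
            intro s hs
            exact_mod_cast Finset.mem_union_left E (Finset.mem_union_left D
              (by exact_mod_cast hs))) hsat
        rw [htr g hgG, htr g' hg'G]
        exact hPdef g hgG g' hg'G hsat'
      · intro g hgG hadj
        obtain ⟨s, hsD, hres⟩ := hDdom g hgG ((htr g hgG).1 hadj)
        exact ⟨s, Finset.mem_union_left E (Finset.mem_union_right P hsD), hres⟩
      · intro hne
        obtain ⟨g, hgG, hadj⟩ := hne
        obtain ⟨s, hsE, hadj'⟩ := hErep ⟨g, hgG, (htr g hgG).1 hadj⟩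
        refine ⟨s, Finset.mem_union_right _ hsE, ?_⟩
        rw [htr s (hEG (Finset.mem_coe.2 hsE))]
        exact hadj'
  choose! F hFa hFb hFc using hperT
  -- distinguishers between distinct traces
  have hdist : ∀ T1 T2 : Set V, ∃ wv : V,
      T1 ∈ 𝒮 → T2 ∈ 𝒮 → T1 ≠ T2 → wv ∈ T1 \ T2 ∪ T2 \ T1 := by
    intro T1 T2
    by_cases h : T1 ∈ 𝒮 ∧ T2 ∈ 𝒮 ∧ T1 ≠ T2
    · obtain ⟨_, _, hne⟩ := h
      have hex : ∃ w, ¬(w ∈ T1 ↔ w ∈ T2) := by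
        by_contra hc
        push_neg at hc
        exact hne (Set.ext fun y => hc y)
      obtain ⟨w, hw⟩ := hex
      refine ⟨w, fun _ _ _ => ?_⟩
      by_cases h1 : w ∈ T1
      · exact Or.inl ⟨h1, fun h2 => hw ⟨fun _ => h2, fun _ => h1⟩⟩
      · have h2 : w ∈ T2 := by
          by_contra h2
          exact hw ⟨fun h3 => absurd h3 h1, fun h3 => absurd h3 h2⟩
        exact Or.inr ⟨h2, h1⟩
    · exact ⟨ustar, fun h1 h2 h3 => absurd ⟨h1, h2, h3⟩ h⟩
  choose wv hwv using hdist
  set S₁ : Set V := ⋃ T ∈ 𝒮, (↑(F T) : Set V) with hS₁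
  set S₂ : Set V := ⋃ T1 ∈ 𝒮, ⋃ T2 ∈ 𝒮,
    (if T1 ≠ T2 then ({wv T1 T2} : Set V) else ∅) with hS₂
  set S : Set V := S₁ ∪ S₂ with hS
  have htraceG : ∀ T ∈ 𝒮, T ⊆ Gs := by
    intro T hT
    obtain ⟨u₀, _, rfl⟩ := hT
    exact fun g hg => hg.1
  have htracemem : ∀ T ∈ 𝒮, ∀ w ∈ T, ∃ y ∈ U, H.Adj y w := by
    intro T hT w hw
    obtain ⟨u₀, hu₀U, rfl⟩ := hT
    exact ⟨u₀, hu₀U, hw.2⟩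
  have hS₂mem : ∀ s ∈ S₂, ∃ T1, T1 ∈ 𝒮 ∧ ∃ T2, T2 ∈ 𝒮 ∧ T1 ≠ T2 ∧ s = wv T1 T2 := by
    intro s hs
    simp only [hS₂, Set.mem_iUnion] at hs
    obtain ⟨T1, hT1, T2, hT2, hs⟩ := hs
    by_cases h : T1 ≠ T2
    · rw [if_pos h] at hs
      exact ⟨T1, hT1, T2, hT2, h, hs⟩
    · rw [if_neg h] at hs
      exact absurd hs (Set.notMem_empty s)
  have hSG : S ⊆ Gs := by
    intro s hs
    rcases hs with hs | hs
    · simp only [hS₁, Set.mem_iUnion] at hs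
      obtain ⟨T, hT, hs⟩ := hs
      exact hFa T hT hs
    · obtain ⟨T1, hT1, T2, hT2, hne, rfl⟩ := hS₂mem s hs
      rcases hwv T1 T2 hT1 hT2 hne with h | h
      · exact htraceG T1 hT1 h.1
      · exact htraceG T2 hT2 h.1
  have hSfin : S.Finite := by
    apply Set.Finite.union
    · exact Set.Finite.biUnion htypes (fun T _ => (F T).finite_toSet)
    · apply Set.Finite.biUnion htypes
      intro T1 _
      apply Set.Finite.biUnion htypes
      intro T2 _
      split
      · exact Set.finite_singleton _
      · exact Set.finite_empty
  have hPe : ∀ s ∈ S, ∃ y ∈ U, ∃ p : H.Walk s y, p.length ≤ 2 := by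
    intro s hs
    rcases hs with hs | hs
    · simp only [hS₁, Set.mem_iUnion] at hs
      obtain ⟨T, hT, hs⟩ := hs
      exact hFb T hT s hs
    · obtain ⟨T1, hT1, T2, hT2, hne, rfl⟩ := hS₂mem s hs
      have : ∃ y ∈ U, H.Adj y (wv T1 T2) := by
        rcases hwv T1 T2 hT1 hT2 hne with h | h
        · exact htracemem T1 hT1 _ h.1
        · exact htracemem T2 hT2 _ h.1
      obtain ⟨y, hyU, hadj⟩ := this
      exact ⟨y, hyU, SimpleGraph.Walk.cons hadj.symm SimpleGraph.Walk.nil, by simp⟩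
  have hFsubS : ∀ T ∈ 𝒮, (↑(F T) : Set V) ⊆ S := by
    intro T hT
    refine subset_trans ?_ Set.subset_union_left
    exact Set.subset_biUnion_of_mem (u := fun T => (↑(F T) : Set V)) hT
  -- the four key properties of S
  have hPa : ∀ u ∈ U, ∀ g ∈ Gs, ∀ g' ∈ Gs, MS.SameAtomicType H S g g' →
      (H.Adj u g ↔ H.Adj u g') := by
    intro u huU g hgG g' hg'G hsat
    have hT : {g : V | g ∈ Gs ∧ H.Adj u g} ∈ 𝒮 := ⟨u, huU, rfl⟩
    exact (hFc _ hT u huU rfl).1 g hgG g' hg'G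
      (NormAux.sat_mono (hFsubS _ hT) hsat)
  have hPc : ∀ u ∈ U, ∀ g ∈ Gs, H.Adj u g → ∃ s ∈ S, H.Adj g s ∨ g = s := by
    intro u huU g hgG hadj
    have hT : {g : V | g ∈ Gs ∧ H.Adj u g} ∈ 𝒮 := ⟨u, huU, rfl⟩
    obtain ⟨s, hsF, hres⟩ := (hFc _ hT u huU rfl).2.1 g hgG hadj
    exact ⟨s, hFsubS _ hT (Finset.mem_coe.2 hsF), hres⟩
  have hPd : ∀ u ∈ U, (∃ g ∈ Gs, H.Adj u g) → ∃ s ∈ S, H.Adj u s := by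
    intro u huU hne
    have hT : {g : V | g ∈ Gs ∧ H.Adj u g} ∈ 𝒮 := ⟨u, huU, rfl⟩
    obtain ⟨s, hsF, hres⟩ := (hFc _ hT u huU rfl).2.2 hne
    exact ⟨s, hFsubS _ hT (Finset.mem_coe.2 hsF), hres⟩
  have hPb : ∀ u ∈ U, ∀ u' ∈ U, MS.SameAtomicType H S u u' →
      ∀ g ∈ Gs, (H.Adj u g ↔ H.Adj u' g) := by
    intro u huU u' hu'U hsat g hgG
    have hT : {g : V | g ∈ Gs ∧ H.Adj u g} ∈ 𝒮 := ⟨u, huU, rfl⟩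
    have hT' : {g : V | g ∈ Gs ∧ H.Adj u' g} ∈ 𝒮 := ⟨u', hu'U, rfl⟩
    by_cases heq : ({g : V | g ∈ Gs ∧ H.Adj u g} : Set V) = {g : V | g ∈ Gs ∧ H.Adj u' g}
    · constructor
      · intro h
        have : g ∈ {g : V | g ∈ Gs ∧ H.Adj u g} := ⟨hgG, h⟩
        rw [heq] at this
        exact this.2
      · intro h
        have : g ∈ {g : V | g ∈ Gs ∧ H.Adj u' g} := ⟨hgG, h⟩
        rw [← heq] at this
        exact this.2
    · exfalso
      set T1 : Set V := {g : V | g ∈ Gs ∧ H.Adj u g} with hT1def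
      set T2 : Set V := {g : V | g ∈ Gs ∧ H.Adj u' g} with hT2def
      have hwS : wv T1 T2 ∈ S := by
        refine Set.mem_union_right _ ?_
        simp only [hS₂, Set.mem_iUnion]
        exact ⟨T1, hT, T2, hT', by rw [if_pos heq]; exact rfl⟩
      have hadj := (hsat _ hwS).2
      rcases hwv T1 T2 hT hT' heq with h | h
      · exact h.2 ⟨h.1.1, hadj.1 h.1.2⟩
      · exact h.2 ⟨h.1.1, hadj.2 h.1.2⟩
  -- symmetry property
  have hsym : ∀ u' ∈ U, ∀ x ∈ U, ∀ g ∈ Gs, ∀ g₀ ∈ Gs,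
      MS.SameAtomicType H S u' g → MS.SameAtomicType H S x g₀ →
      H.Adj u' g₀ → H.Adj x g := by
    intro u' hu'U x hxU g hgG g₀ hg₀G h1 h2 h3
    exact NormAux.symm_lemma H Gs k hk fs S hSfin hSG u' x (hU u' hu'U) (hU x hxU)
      (fun g hg g' hg' hs => hPa u' hu'U g hg g' hg' hs)
      (fun g hg g' hg' hs => hPa x hxU g hg g' hg' hs)
      g g₀ hgG hg₀G h1 h2 h3
  obtain ⟨H', h1, h2, h3, h4, h5⟩ :=
    NormAux.assemble H Gs U S hSG hPa hPb hPc hPd hPe hsym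
  exact ⟨S, hSG, hSfin, H', h1, h2, h3, h4, h5⟩
end

section
/- Let N be a structure in a finite relational language, let S be a subset of its domain, let u, v, w be elements of N, and let r, q ∈ ℕ be positive integers. If u is not radius-r flip independent of v over S, and v is not radius-q flip independent of w over S, then u is not radius-(r+q) flip independent of w over S. -/
open FirstOrder FirstOrder.Language

section FlipTransAux

open FirstOrder.Language.BoundedFormula

lemma aux_isQF_foldr_inf {L : Lang} {α : Type} {n : ℕ} (l : List (L.BoundedFormula α n))
    (h : ∀ φ ∈ l, φ.IsQF) : (l.foldr (· ⊓ ·) ⊤).IsQF := by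
  induction l with
  | nil => exact IsQF.top
  | cons a l ih => exact (h a (by simp)).inf (ih fun φ hφ => h φ (by simp [hφ]))

lemma aux_isQF_foldr_sup {L : Lang} {α : Type} {n : ℕ} (l : List (L.BoundedFormula α n))
    (h : ∀ φ ∈ l, φ.IsQF) : (l.foldr (· ⊔ ·) ⊥).IsQF := by
  induction l with
  | nil => exact isQF_bot
  | cons a l ih => exact (h a (by simp)).sup (ih fun φ hφ => h φ (by simp [hφ]))

/-- Conjunction over a finset (the old `BoundedFormula.iInf`). -/
noncomputable def auxBInf {L : Lang} {α β : Type} {n : ℕ} (t : Finset β)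
    (f : β → L.BoundedFormula α n) : L.BoundedFormula α n :=
  (t.toList.map f).foldr (· ⊓ ·) ⊤

/-- Disjunction over a finset (the old `BoundedFormula.iSup`). -/
noncomputable def auxBSup {L : Lang} {α β : Type} {n : ℕ} (t : Finset β)
    (f : β → L.BoundedFormula α n) : L.BoundedFormula α n :=
  (t.toList.map f).foldr (· ⊔ ·) ⊥

lemma realize_auxBInf {L : Lang} {M : Type} [L.Structure M] {α β : Type} {n : ℕ}
    (t : Finset β) (f : β → L.BoundedFormula α n) (v : α → M) (xs : Fin n → M) :
    (auxBInf t f).Realize v xs ↔ ∀ b ∈ t, (f b).Realize v xs := by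
  simp only [auxBInf, realize_foldr_inf, List.mem_map, Finset.mem_toList]
  constructor
  · intro h b hb; exact h _ ⟨b, hb, rfl⟩
  · rintro h _ ⟨b, hb, rfl⟩; exact h b hb

lemma realize_auxBSup {L : Lang} {M : Type} [L.Structure M] {α β : Type} {n : ℕ}
    (t : Finset β) (f : β → L.BoundedFormula α n) (v : α → M) (xs : Fin n → M) :
    (auxBSup t f).Realize v xs ↔ ∃ b ∈ t, (f b).Realize v xs := by
  simp only [auxBSup, realize_foldr_sup, List.mem_map, Finset.mem_toList]
  constructor
  · rintro ⟨_, ⟨b, hb, rfl⟩, h⟩; exact ⟨b, hb, h⟩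
  · rintro ⟨b, hb, h⟩; exact ⟨_, ⟨b, hb, rfl⟩, h⟩

lemma aux_isQF_iInf {L : Lang} {α β : Type} {n : ℕ} (t : Finset β)
    (f : β → L.BoundedFormula α n) (h : ∀ b, (f b).IsQF) : (auxBInf t f).IsQF := by
  refine aux_isQF_foldr_inf _ ?_
  simp only [List.mem_map]
  rintro _ ⟨b, -, rfl⟩; exact h b

lemma aux_isQF_iSup {L : Lang} {α β : Type} {n : ℕ} (t : Finset β)
    (f : β → L.BoundedFormula α n) (h : ∀ b, (f b).IsQF) : (auxBSup t f).IsQF := by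
  refine aux_isQF_foldr_sup _ ?_
  simp only [List.mem_map]
  rintro _ ⟨b, -, rfl⟩; exact h b

lemma aux_realize_iSup {L : Lang} {M : Type} [L.Structure M] {α β : Type} (t : Finset β)
    (f : β → L.Formula α) (v : α → M) :
    Formula.Realize (auxBSup t f) v ↔ ∃ b ∈ t, (f b).Realize v :=
  realize_auxBSup t f v default

lemma aux_realize_iInf {L : Lang} {M : Type} [L.Structure M] {α β : Type} (t : Finset β)
    (f : β → L.Formula α) (v : α → M) :
    Formula.Realize (auxBInf t f) v ↔ ∀ b ∈ t, (f b).Realize v :=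
  realize_auxBInf t f v default

/-- Language with relations of `L` paired with a set of positions to pin to a point. -/
def isoLang (L : Lang) : Lang := ⟨fun _ => Empty, fun n => L.Relations n × (Fin n → Bool)⟩

lemma isoLang_rel (L : Lang) : (isoLang L).IsRelational :=
  fun _ => inferInstanceAs (IsEmpty Empty)

lemma isoLang_finite (L : Lang) (hfin : Finite (Σ n, L.Relations n)) :
    Finite (Σ n, (isoLang L).Relations n) := by
  let e : (Σ p : (Σ n, L.Relations n), (Fin p.1 → Bool)) ≃ (Σ n, (isoLang L).Relations n) :=
    { toFun := fun x => ⟨x.1.1, x.1.2, x.2⟩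
      invFun := fun x => ⟨⟨x.1, x.2.1⟩, x.2.2⟩
      left_inv := fun ⟨⟨_, _⟩, _⟩ => rfl
      right_inv := fun ⟨_, _, _⟩ => rfl }
  exact Finite.of_equiv _ e

/-- The structure isolating `u`: `(R, I)` holds of `x` iff no entry of `x` is `u` and
`R` holds of `x` with the positions in `I` overwritten by `u`. -/
def isoStr (L : Lang) {N : Type} (s : L.Structure N) (u : N) : (isoLang L).Structure N where
  funMap := fun {_} f _ => f.elim
  RelMap := fun {_} R x => (∀ i, x i ≠ u) ∧ s.RelMap R.1 (fun i => if R.2 i then u else x i)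

lemma isoStr_qfdef₁ (L : Lang) {N : Type} (s : L.Structure N) (S : Set N) (u : N)
    (hu : u ∈ S) (n : ℕ) (R : (isoLang L).Relations n) :
    MS.QFDefinable L s S n (fun x => (isoStr L s u).RelMap R x) := by
  classical
  refine ⟨1, (auxBInf Finset.univ fun i : Fin n =>
      ∼(Term.equal (L := L) (var (Sum.inl i)) (var (Sum.inr 0)))) ⊓
      (R.1.formula fun i => if R.2 i then var (Sum.inr 0) else var (Sum.inl i)),
    fun _ => u, ?_, fun _ => hu, ?_⟩
  · exact ((aux_isQF_iInf _ _ fun i =>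
      (IsAtomic.equal _ _).isQF.not).inf (IsAtomic.rel _ _).isQF)
  · intro x
    letI := s
    rw [iff_comm]
    simp only [isoStr, Formula.Realize, realize_inf, realize_auxBInf, Finset.mem_univ,
      forall_true_left, realize_not, Term.equal, Relations.formula,
      realize_bdEqual, realize_rel, Term.realize_relabel, Term.realize_var,
      Function.comp, Sum.elim_inl, Sum.elim_inr]
    constructor
    · rintro ⟨h1, h2⟩
      refine ⟨fun i hi => h1 i (by simp [hi]), ?_⟩
      convert h2 using 2
      split_ifs with h <;> simp [h, Term.realize]
    · rintro ⟨h1, h2⟩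
      refine ⟨fun i => by simpa using h1 i, ?_⟩
      convert h2 using 2
      split_ifs with h <;> simp [h, Term.realize]

lemma isoStr_qfdef₂ (L : Lang) {N : Type} (s : L.Structure N) (S : Set N) (u : N)
    (hu : u ∈ S) (n : ℕ) (R : L.Relations n) :
    MS.QFDefinable (isoLang L) (isoStr L s u) S n (fun x => s.RelMap R x) := by
  classical
  letI := s
  letI := isoStr L s u
  refine ⟨1, auxBSup (Finset.univ : Finset (Fin n → Bool)) (fun I =>
    (auxBInf Finset.univ fun i : Fin n =>
      if I i then Term.equal (L := isoLang L) (var (Sum.inl i)) (var (Sum.inr (0 : Fin 1)))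
      else ∼(Term.equal (L := isoLang L) (var (Sum.inl i)) (var (Sum.inr (0 : Fin 1))))) ⊓
    (if h : ∀ i, I i = true then
        (if s.RelMap R fun _ => u then ⊤ else ⊥)
     else Relations.formula (L := isoLang L) (n := n) ((R, I) : (isoLang L).Relations n)
       (fun i => if I i then var (Sum.inl (Classical.choose (not_forall.mp h)))
                 else var (Sum.inl i)))),
    fun _ => u, ?_, fun _ => hu, ?_⟩
  · refine aux_isQF_iSup _ _ fun I => ?_
    refine (aux_isQF_iInf _ _ fun i => ?_).inf ?_
    · by_cases h : I i = true
      · rw [if_pos h]; exact (IsAtomic.equal _ _).isQF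
      · rw [if_neg h]; exact (IsAtomic.equal _ _).isQF.not
    · by_cases h : ∀ i, I i = true
      · rw [dif_pos h]
        by_cases hR : s.RelMap R fun _ => u
        · rw [if_pos hR]; exact IsQF.top
        · rw [if_neg hR]; exact isQF_bot
      · rw [dif_neg h]; exact (IsAtomic.rel _ _).isQF
  · intro x
    constructor
    · intro hx
      rw [aux_realize_iSup]
      refine ⟨fun i => decide (x i = u), Finset.mem_univ _, Formula.realize_inf.mpr ⟨?_, ?_⟩⟩
      · rw [aux_realize_iInf]
        intro i _
        by_cases h : x i = u
        · rw [if_pos (decide_eq_true h)]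
          simp [Term.equal, Formula.Realize, realize_bdEqual, Term.realize_relabel,
            Term.realize, h]
        · rw [if_neg (by simpa using h)]
          simp [Term.equal, Formula.Realize, realize_not, realize_bdEqual,
            Term.realize_relabel, Term.realize, h]
      · by_cases hall : ∀ i, decide (x i = u) = true
        · rw [dif_pos hall]
          have hxu : x = fun _ => u := funext fun i => of_decide_eq_true (hall i)
          rw [if_pos (by rw [← hxu]; exact hx)]
          exact Formula.realize_top.mpr trivial
        · rw [dif_neg hall]
          erw [Formula.realize_rel]
          have hj : ¬ decide (x (Classical.choose (not_forall.mp hall)) = u) = true :=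
            Classical.choose_spec (not_forall.mp hall)
          have hju : x (Classical.choose (not_forall.mp hall)) ≠ u := by simpa using hj
          refine ⟨?_, ?_⟩
          · intro i
            beta_reduce
            split_ifs with h
            · simpa [Term.realize] using hju
            · simpa [Term.realize] using of_decide_eq_false (by simpa using h)
          · convert hx using 2
            rename_i i
            beta_reduce
            split_ifs with h
            · exact (of_decide_eq_true h).symm
            · simp [Term.realize]
    · intro hx
      rw [aux_realize_iSup] at hx
      obtain ⟨I, -, hI⟩ := hx
      rw [Formula.realize_inf] at hI
      obtain ⟨hEqs, hBody⟩ := hI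
      rw [aux_realize_iInf] at hEqs
      have hspec : ∀ i, x i = u ↔ I i = true := by
        intro i
        have h0 := hEqs i (Finset.mem_univ _)
        by_cases h : I i = true
        · rw [if_pos h] at h0
          simp only [Term.equal, Formula.Realize, realize_bdEqual, Term.realize_relabel,
            Term.realize, Function.comp, Sum.elim_inl, Sum.elim_inr] at h0
          simp [h0, h]
        · rw [if_neg h] at h0
          simp only [Term.equal, Formula.Realize, realize_not, realize_bdEqual,
            Term.realize_relabel, Term.realize, Function.comp, Sum.elim_inl,
            Sum.elim_inr] at h0
          simp [h0, h]
      by_cases hall : ∀ i, I i = true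
      · rw [dif_pos hall] at hBody
        have hxu : x = fun _ => u := funext fun i => (hspec i).mpr (hall i)
        by_cases hR : s.RelMap R fun _ => u
        · rw [hxu]; exact hR
        · rw [if_neg hR] at hBody
          exact absurd hBody (by simp [Formula.Realize])
      · rw [dif_neg hall] at hBody
        erw [Formula.realize_rel] at hBody
        obtain ⟨-, h2⟩ := hBody
        convert h2 using 2
        rename_i i
        beta_reduce
        split_ifs with h
        · exact (hspec i).mpr h
        · simp [Term.realize]

lemma isoStr_isolated (L : Lang) {N : Type} (s : L.Structure N) (u : N) (a : N) :
    ¬ (MS.gaif (isoLang L) (isoStr L s u)).Adj u a := by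
  rintro ⟨hne, n, R, x, hR, ⟨i, hi⟩, -⟩
  exact hR.1 i hi

end FlipTransAux

/-- Transitivity of flip dependence in relational structures: if `u` is
not radius-`r` flip independent of `v` over `S` and `v` is not radius-`q` flip
independent of `w` over `S`, then `u` is not radius-`(r+q)` flip independent of `w`
over `S`. -/
theorem flip_dependence_transitive_structures
    (L : Lang) (hrel : L.IsRelational) (hfin : Finite (Σ n, L.Relations n))
    {N : Type} (s : L.Structure N) (S : Set N) (u v w : N) (r q : ℕ)
    (hr : 0 < r) (hq : 0 < q)
    (huv : ¬ MS.FlipIndepStruct L s S r u v)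
    (hvw : ¬ MS.FlipIndepStruct L s S q v w) :
    ¬ MS.FlipIndepStruct L s S (r + q) u w := by
  rintro (⟨huw, hus⟩ | ⟨L', s', hflip, hfar⟩)
  · rcases eq_or_ne u v with rfl | hne
    · exact huv (Or.inl ⟨rfl, hus⟩)
    · refine huv (Or.inr ⟨isoLang L, isoStr L s u,
        ⟨isoLang_rel L, isoLang_finite L hfin,
          fun n R => isoStr_qfdef₁ L s S u hus n R,
          fun n R => isoStr_qfdef₂ L s S u hus n R⟩, ?_⟩)
      intro p
      cases p with
      | nil => exact absurd rfl hne
      | cons h _ => exact absurd h (isoStr_isolated L s u _)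
  · have h1 : ¬ MS.FarApart (MS.gaif L' s') r u v :=
      fun hf => huv (Or.inr ⟨L', s', hflip, hf⟩)
    have h2 : ¬ MS.FarApart (MS.gaif L' s') q v w :=
      fun hf => hvw (Or.inr ⟨L', s', hflip, hf⟩)
    simp only [MS.FarApart, not_forall, not_lt] at h1 h2
    obtain ⟨p, hp⟩ := h1
    obtain ⟨p', hp'⟩ := h2
    have := hfar (p.append p')
    rw [SimpleGraph.Walk.length_append] at this
    omega
end

section
/- Let C be a class of structures in a finite relational language and let C̄ be its elementary closure (the class of all models of Th(C)). If C is atomic-stable, then C̄ is atomic-stable; and if C is existentially monadically dependent, then C̄ is existentially monadically dependent. -/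
open FirstOrder FirstOrder.Language

namespace MSAux
open MS

def RzF {L' : Lang} {M : Type} (sM : L'.Structure M) {α : Type}
    (φ : L'.Formula α) (v : α → M) : Prop :=
  @Formula.Realize L' M sM α φ v

/-- existential closure sentence of a formula over a finite variable type -/
noncomputable def closure {L' : Lang} {γ : Type} [Finite γ] (χ : L'.Formula γ) : L'.Sentence :=
  (χ.relabel (Sum.inr : γ → Empty ⊕ γ)).iExs γ

lemma realize_closure {L' : Lang} {γ : Type} [Finite γ] (χ : L'.Formula γ)
    (M : Type) (sM : L'.Structure M) :
    (@Sentence.Realize L' M sM (closure χ)) ↔ ∃ h : γ → M, RzF sM χ h := by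
  letI := sM
  rw [closure, Sentence.Realize, Formula.realize_iExs]
  simp only [Formula.realize_relabel, Sum.elim_comp_inr]
  exact ⟨fun ⟨i, hi⟩ => ⟨i, hi⟩, fun ⟨i, hi⟩ => ⟨i, hi⟩⟩

lemma transfer {L : Lang} {C : MS.StructClass L} {A : Σ N : Type, L.Structure N}
    (hA : A ∈ MS.ElemClosure L C) (σ : L.Sentence)
    (h : @Sentence.Realize L A.1 A.2 σ) : ∃ B ∈ C, @Sentence.Realize L B.1 B.2 σ := by
  by_contra hc
  push_neg at hc
  have hσ : σ.not ∈ MS.Thy L C := by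
    intro B hB
    exact (@Sentence.realize_not L B.1 B.2 σ).2 (hc B hB)
  exact (@Sentence.realize_not L A.1 A.2 σ).1 (hA _ hσ) h

/-- the half-graph pattern formula -/
noncomputable def hgFormula {L : Lang} {p q : ℕ} (k : ℕ) (φ : L.Formula (Fin p ⊕ Fin q)) :
    L.Formula ((Fin k × Fin p) ⊕ (Fin k × Fin q)) :=
  BoundedFormula.iInf (fun ij : Fin k × Fin k =>
    if ij.1 ≤ ij.2 then φ.relabel (Sum.map (fun r => (ij.1, r)) (fun r => (ij.2, r)))
    else (φ.relabel (Sum.map (fun r => (ij.1, r)) (fun r => (ij.2, r)))).not)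

lemma realize_hg {L : Lang} {p q : ℕ} {k : ℕ} (φ : L.Formula (Fin p ⊕ Fin q))
    {M : Type} (sM : L.Structure M) (h : (Fin k × Fin p) ⊕ (Fin k × Fin q) → M) :
    RzF sM (hgFormula k φ) h ↔ ∀ i j : Fin k,
      (RzF sM φ (Sum.elim (fun r => h (Sum.inl (i, r))) (fun r => h (Sum.inr (j, r)))) ↔ i ≤ j) := by
  letI := sM
  have hcomp : ∀ i j : Fin k,
      h ∘ (Sum.map (fun r => (i, r)) (fun r => (j, r)))
        = Sum.elim (fun r => h (Sum.inl (i, r))) (fun r => h (Sum.inr (j, r))) := by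
    intro i j; funext x; cases x <;> rfl
  rw [RzF, hgFormula, Formula.Realize, BoundedFormula.realize_iInf]
  constructor
  · intro H i j
    have H' := H (i, j)
    by_cases hij : i ≤ j
    · rw [if_pos hij] at H'
      have hr : Formula.Realize (φ.relabel (Sum.map (fun r => (i, r)) (fun r => (j, r)))) h := H'
      rw [Formula.realize_relabel, hcomp i j] at hr
      exact iff_of_true hr hij
    · rw [if_neg hij] at H'
      have hr : Formula.Realize (φ.relabel (Sum.map (fun r => (i, r)) (fun r => (j, r)))).not h := H'
      rw [Formula.realize_not, Formula.realize_relabel, hcomp i j] at hr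
      exact iff_of_false hr hij
  · intro H ij
    by_cases hij : ij.1 ≤ ij.2
    · rw [if_pos hij]
      show Formula.Realize (φ.relabel (Sum.map (fun r => (ij.1, r)) (fun r => (ij.2, r)))) h
      rw [Formula.realize_relabel, hcomp ij.1 ij.2]
      exact (H ij.1 ij.2).2 hij
    · rw [if_neg hij]
      show Formula.Realize (φ.relabel (Sum.map (fun r => (ij.1, r)) (fun r => (ij.2, r)))).not h
      rw [Formula.realize_not, Formula.realize_relabel, hcomp ij.1 ij.2]
      exact fun hr => hij ((H ij.1 ij.2).1 hr)

/-! ### Part 2 machinery -/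

abbrev Lu (L : Lang) : Lang := L.sum MS.unaryLang

def lux {L : Lang} {M : Type} (sL : L.Structure M) (U : ℕ → Set M) : (Lu L).Structure M :=
  @Language.sumStructure L MS.unaryLang M sL (MS.unaryStructure U)

def Rz {L' : Lang} {M : Type} (sM : L'.Structure M) {α : Type} {n : ℕ}
    (φ : L'.BoundedFormula α n) (v : α → M) (xs : Fin n → M) : Prop :=
  @BoundedFormula.Realize L' M sM α n φ v xs

lemma term_eq_var {L : Lang} (hrel : L.IsRelational) {β : Type} (t : (Lu L).Term β) :
    ∃ x, t = Term.var x := by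
  cases t with
  | var x => exact ⟨x, rfl⟩
  | func F ts =>
    rcases F with F | F
    · exact ((hrel _).false F).elim
    · exact F.elim

/-- Normal form for existential formulas. -/
lemma exists_qf {L' : Lang} {α : Type} {n : ℕ} (φ : L'.BoundedFormula α n)
    (h : φ.IsExistential) :
    ∃ (e : ℕ) (hne : n ≤ e) (ψ : L'.BoundedFormula α e), ψ.IsQF ∧
      ∀ (M : Type) (sM : L'.Structure M) (v : α → M) (xs : Fin n → M),
        (Rz sM φ v xs ↔ ∃ ws : Fin e → M,
          (∀ i : Fin n, ws (Fin.castLE hne i) = xs i) ∧ Rz sM ψ v ws) := by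
  induction h with
  | of_isQF hqf =>
    refine ⟨_, le_rfl, _, hqf, fun M sM v xs => ⟨fun h => ⟨xs, fun i => by simp [Fin.castLE], h⟩, ?_⟩⟩
    rintro ⟨ws, hws, h⟩
    have hwx : ws = xs := funext fun i => by simpa [Fin.castLE] using hws i
    rwa [hwx] at h
  | @ex n' φ' hφ' ih =>
    obtain ⟨e, hne, ψ, hqf, hsem⟩ := ih
    refine ⟨e, Nat.le_of_succ_le hne, ψ, hqf, fun M sM v xs => ?_⟩
    have hex : Rz sM φ'.ex v xs ↔ ∃ x : M, Rz sM φ' v (Fin.snoc xs x) :=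
      BoundedFormula.realize_ex
    rw [hex]
    constructor
    · rintro ⟨x, hx⟩
      obtain ⟨ws, hws, hψ⟩ := (hsem M sM v (Fin.snoc xs x)).1 hx
      refine ⟨ws, fun i => ?_, hψ⟩
      have h1 : Fin.castLE (Nat.le_of_succ_le hne) i = Fin.castLE hne i.castSucc := by
        ext; simp
      rw [h1, hws i.castSucc, Fin.snoc_castSucc]
    · rintro ⟨ws, hws, hψ⟩
      refine ⟨ws (Fin.castLE hne (Fin.last n')), (hsem M sM v _).2 ⟨ws, fun i => ?_, hψ⟩⟩
      refine Fin.lastCases ?_ ?_ i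
      · rw [Fin.snoc_last]
      · intro j
        rw [Fin.snoc_castSucc]
        have h1 : Fin.castLE hne j.castSucc = Fin.castLE (Nat.le_of_succ_le hne) j := by
          ext; simp
        rw [h1, hws j]

/-- relabel the unary predicates `j ↦ j+1` -/
def shiftRel {L : Lang} : ∀ {n}, (Lu L).Relations n → (Lu L).Relations n
  | _, Sum.inl R => Sum.inl R
  | _, Sum.inr (MS.unaryRel.pred i) => Sum.inr (MS.unaryRel.pred (i + 1))

def shiftPred {L : Lang} {α : Type} : ∀ {n}, (Lu L).BoundedFormula α n → (Lu L).BoundedFormula α n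
  | _, BoundedFormula.falsum => BoundedFormula.falsum
  | _, BoundedFormula.equal t u => BoundedFormula.equal t u
  | _, BoundedFormula.rel R ts => BoundedFormula.rel (shiftRel R) ts
  | _, BoundedFormula.imp f g => (shiftPred f).imp (shiftPred g)
  | _, BoundedFormula.all f => (shiftPred f).all

lemma shiftPred_isQF {L : Lang} {α : Type} {n} {φ : (Lu L).BoundedFormula α n}
    (h : φ.IsQF) : (shiftPred φ).IsQF := by
  induction h with
  | falsum => exact BoundedFormula.IsQF.falsum
  | of_isAtomic ha =>
    cases ha with
    | equal t₁ t₂ => exact (BoundedFormula.IsAtomic.equal t₁ t₂).isQF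
    | rel R ts => exact (BoundedFormula.IsAtomic.rel (shiftRel R) ts).isQF
  | imp _ _ ih₁ ih₂ => exact ih₁.imp ih₂

lemma realize_shiftPred {L : Lang} (hrel : L.IsRelational) {M : Type}
    (sL : L.Structure M) (U : ℕ → Set M) {α : Type} :
    ∀ {n} (φ : (Lu L).BoundedFormula α n) (v : α → M) (xs : Fin n → M),
      (Rz (lux sL U) (shiftPred φ) v xs ↔ Rz (lux sL (fun j => U (j + 1))) φ v xs) := by
  intro n φ
  induction φ with
  | falsum => exact fun _ _ => Iff.rfl
  | equal t u =>
    intro v xs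
    obtain ⟨x, rfl⟩ := term_eq_var hrel t
    obtain ⟨y, rfl⟩ := term_eq_var hrel u
    exact Iff.rfl
  | @rel n' l R ts =>
    intro v xs
    have hts : ts = fun i => Term.var (Classical.choose (term_eq_var hrel (ts i))) :=
      funext fun i => Classical.choose_spec (term_eq_var hrel (ts i))
    rw [hts]
    rcases R with R | R
    · exact Iff.rfl
    · rcases R with ⟨j⟩
      exact Iff.rfl
  | imp f g ihf ihg =>
    intro v xs
    exact imp_congr (ihf v xs) (ihg v xs)
  | all f ihf =>
    intro v xs
    exact forall_congr' fun x => ihf v (Fin.snoc xs x)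

lemma isQF_foldr {L' : Lang} {α : Type} {n} (l : List (L'.BoundedFormula α n))
    (h : ∀ φ ∈ l, φ.IsQF) : (l.foldr (· ⊓ ·) ⊤).IsQF := by
  induction l with
  | nil => exact BoundedFormula.IsQF.top
  | cons a l ih =>
    exact (h a List.mem_cons_self).inf (ih fun φ hφ => h φ (List.mem_cons_of_mem _ hφ))

lemma isQF_iInf {L' : Lang} {β α : Type} {n} [Finite β] (F : β → L'.BoundedFormula α n)
    (h : ∀ b, (F b).IsQF) : (BoundedFormula.iInf F).IsQF := by
  rw [BoundedFormula.iInf]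
  apply isQF_foldr
  intro φ hφ
  simp only [List.mem_map] at hφ
  obtain ⟨b, _, rfl⟩ := hφ
  exact h b

/-- guard: all bound variables satisfy predicate 0 -/
noncomputable def guardF {L : Lang} {α : Type} (e : ℕ) : (Lu L).BoundedFormula α e :=
  BoundedFormula.iInf (fun i : Fin e =>
    BoundedFormula.rel (L := Lu L) (Sum.inr (MS.unaryRel.pred 0)) (fun _ : Fin 1 => Term.var (Sum.inr i)))

lemma guardF_isQF {L : Lang} {α : Type} {e : ℕ} : (guardF (L := L) (α := α) e).IsQF :=
  isQF_iInf _ fun i => (BoundedFormula.IsAtomic.rel _ _).isQF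

lemma realize_guardF {L : Lang} {M : Type} (sL : L.Structure M) (U : ℕ → Set M) {α : Type}
    {e : ℕ} (v : α → M) (ws : Fin e → M) :
    Rz (lux sL U) (guardF e) v ws ↔ ∀ i, ws i ∈ U 0 := by
  letI := lux sL U
  rw [Rz, guardF, BoundedFormula.realize_iInf]
  constructor
  · intro H i
    exact H i
  · intro H i
    exact H i

lemma isExistential_exs {L' : Lang} {α : Type} :
    ∀ {n} {φ : L'.BoundedFormula α n}, φ.IsExistential → φ.exs.IsExistential := by
  intro n
  induction n with
  | zero => exact fun h => h
  | succ n ih => exact fun h => ih h.ex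

/-- quantifier-free transfer along an atomic-diagram-preserving correspondence -/
lemma qf_transfer {L : Lang} (hrel : L.IsRelational) {M B : Type}
    (sM : L.Structure M) (sB : L.Structure B) (U : ℕ → Set M) (V : ℕ → Set B)
    {ι : Type} (f : ι → M) (g : ι → B)
    (heq : ∀ p q, g p = g q ↔ f p = f q)
    (hrelmap : ∀ (l : ℕ) (R : L.Relations l) (t : Fin l → ι),
        (@Structure.RelMap L B sB l R (g ∘ t) ↔ @Structure.RelMap L M sM l R (f ∘ t)))
    (hU : ∀ (j : ℕ) (p : ι), f p ∈ U j ↔ g p ∈ V j)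
    {α : Type} {n : ℕ} {φ : (Lu L).BoundedFormula α n} (hqf : φ.IsQF) :
    ∀ (v : α → ι) (xs : Fin n → ι),
      (Rz (lux sM U) φ (f ∘ v) (f ∘ xs) ↔ Rz (lux sB V) φ (g ∘ v) (g ∘ xs)) := by
  have helimf : ∀ (v : α → ι) (xs : Fin n → ι) (z : α ⊕ Fin n),
      Sum.elim (f ∘ v) (f ∘ xs) z = f (Sum.elim v xs z) := by
    intro v xs z; cases z <;> rfl
  have helimg : ∀ (v : α → ι) (xs : Fin n → ι) (z : α ⊕ Fin n),
      Sum.elim (g ∘ v) (g ∘ xs) z = g (Sum.elim v xs z) := by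
    intro v xs z; cases z <;> rfl
  induction hqf with
  | falsum => exact fun v xs => Iff.rfl
  | of_isAtomic ha =>
    cases ha with
    | equal t u =>
      intro v xs
      obtain ⟨x, rfl⟩ := term_eq_var hrel t
      obtain ⟨y, rfl⟩ := term_eq_var hrel u
      show Sum.elim (f ∘ v) (f ∘ xs) x = Sum.elim (f ∘ v) (f ∘ xs) y ↔
        Sum.elim (g ∘ v) (g ∘ xs) x = Sum.elim (g ∘ v) (g ∘ xs) y
      rw [helimf v xs x, helimf v xs y, helimg v xs x, helimg v xs y, heq]
    | @rel l R ts =>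
      intro v xs
      have hts : ts = fun i => Term.var (Classical.choose (term_eq_var hrel (ts i))) :=
        funext fun i => Classical.choose_spec (term_eq_var hrel (ts i))
      rw [hts]
      rcases R with R | R
      · show @Structure.RelMap L M sM l R (fun i => Sum.elim (f ∘ v) (f ∘ xs) _) ↔
          @Structure.RelMap L B sB l R (fun i => Sum.elim (g ∘ v) (g ∘ xs) _)
        have e1 : (fun i => Sum.elim (f ∘ v) (f ∘ xs)
            (Classical.choose (term_eq_var hrel (ts i))))
            = f ∘ (fun i => Sum.elim v xs (Classical.choose (term_eq_var hrel (ts i)))) :=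
          funext fun i => helimf v xs _
        have e2 : (fun i => Sum.elim (g ∘ v) (g ∘ xs)
            (Classical.choose (term_eq_var hrel (ts i))))
            = g ∘ (fun i => Sum.elim v xs (Classical.choose (term_eq_var hrel (ts i)))) :=
          funext fun i => helimg v xs _
        rw [e1, e2]
        exact (hrelmap l R _).symm
      · rcases R with ⟨j⟩
        show Sum.elim (f ∘ v) (f ∘ xs) _ ∈ U j ↔ Sum.elim (g ∘ v) (g ∘ xs) _ ∈ V j
        rw [helimf, helimg]
        exact hU j _
  | imp _ _ ih₁ ih₂ =>
    intro v xs
    exact imp_congr (ih₁ v xs) (ih₂ v xs)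

-- the atomic diagram of a finite tuple as a single formula
open Classical in
noncomputable def diagram {L : Lang} {M : Type} (sM : L.Structure M)
    [Fintype (Σ l : ℕ, L.Relations l)] {ι : Type} [Fintype ι] (f : ι → M) : L.Formula ι :=
  BoundedFormula.iInf
    (β := ((ι × ι) ⊕ (Σ pR : (Σ l : ℕ, L.Relations l), (Fin pR.1 → ι))))
    (Sum.elim
      (fun pq => if f pq.1 = f pq.2 then Term.equal (Term.var pq.1) (Term.var pq.2)
        else (Term.equal (Term.var pq.1) (Term.var pq.2)).not)
      (fun Rt => if @Structure.RelMap L M sM Rt.1.1 Rt.1.2 (f ∘ Rt.2)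
        then Rt.1.2.formula (fun i => Term.var (Rt.2 i))
        else (Rt.1.2.formula (fun i => Term.var (Rt.2 i))).not))

lemma realize_diagram {L : Lang} {M : Type} (sM : L.Structure M)
    [Fintype (Σ l : ℕ, L.Relations l)] {ι : Type} [Fintype ι] (f : ι → M)
    (B : Type) (sB : L.Structure B) (h : ι → B) :
    RzF sB (diagram sM f) h ↔
      ((∀ p q : ι, h p = h q ↔ f p = f q) ∧
       (∀ (l : ℕ) (R : L.Relations l) (t : Fin l → ι),
          @Structure.RelMap L B sB l R (h ∘ t) ↔ @Structure.RelMap L M sM l R (f ∘ t))) := by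
  classical
  letI := sB
  rw [RzF, Formula.Realize, diagram, BoundedFormula.realize_iInf]
  constructor
  · intro H
    constructor
    · intro p q
      have H' := H (Sum.inl (p, q))
      by_cases hf : f p = f q
      · rw [Sum.elim_inl, if_pos hf] at H'
        have : Formula.Realize (Term.equal (Term.var p) (Term.var q)) h := H'
        rw [Formula.realize_equal] at this
        exact iff_of_true this hf
      · rw [Sum.elim_inl, if_neg hf] at H'
        have : Formula.Realize (Term.equal (Term.var p) (Term.var q)).not h := H'
        rw [Formula.realize_not, Formula.realize_equal] at this
        exact iff_of_false this hf
    · intro l R t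
      have H' := H (Sum.inr ⟨⟨l, R⟩, t⟩)
      by_cases hf : @Structure.RelMap L M sM l R (f ∘ t)
      · rw [Sum.elim_inr, if_pos hf] at H'
        have : Formula.Realize (Relations.formula R (fun i => Term.var (t i))) h := H'
        rw [Formula.realize_rel] at this
        exact iff_of_true this hf
      · rw [Sum.elim_inr, if_neg hf] at H'
        have : Formula.Realize (Relations.formula R (fun i => Term.var (t i))).not h := H'
        rw [Formula.realize_not, Formula.realize_rel] at this
        exact iff_of_false this hf
  · rintro ⟨H1, H2⟩ θ
    rcases θ with ⟨p, q⟩ | ⟨⟨l, R⟩, t⟩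
    · rw [Sum.elim_inl]
      by_cases hf : f p = f q
      · rw [if_pos hf]
        show Formula.Realize (Term.equal (Term.var p) (Term.var q)) h
        rw [Formula.realize_equal]
        exact (H1 p q).2 hf
      · rw [if_neg hf]
        show Formula.Realize (Term.equal (Term.var p) (Term.var q)).not h
        rw [Formula.realize_not, Formula.realize_equal]
        exact fun hc => hf ((H1 p q).1 hc)
    · rw [Sum.elim_inr]
      by_cases hf : @Structure.RelMap L M sM l R (f ∘ t)
      · rw [if_pos hf]
        show Formula.Realize (Relations.formula R (fun i => Term.var (t i))) h
        rw [Formula.realize_rel]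
        exact (H2 l R t).2 hf
      · rw [if_neg hf]
        show Formula.Realize (Relations.formula R (fun i => Term.var (t i))).not h
        rw [Formula.realize_not, Formula.realize_rel]
        exact fun hc => hf ((H2 l R t).1 hc)

lemma diagram_self {L : Lang} {M : Type} (sM : L.Structure M)
    [Fintype (Σ l : ℕ, L.Relations l)] {ι : Type} [Fintype ι] (f : ι → M) :
    RzF sM (diagram sM f) f := by
  rw [realize_diagram]
  exact ⟨fun p q => Iff.rfl, fun l R t => Iff.rfl⟩

lemma key {L : Lang} (hrel : L.IsRelational) (hfin : Finite (Σ n, L.Relations n))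
    {C : MS.StructClass L} {m m' : ℕ} (hm : 0 < m)
    (φ : (Lu L).Formula (Fin m ⊕ Fin m')) {e : ℕ}
    (ψ : (Lu L).BoundedFormula (Fin m ⊕ Fin m') e) (hqf : ψ.IsQF)
    (hsem : ∀ (M : Type) (sM : (Lu L).Structure M) (v : Fin m ⊕ Fin m' → M) (xs : Fin 0 → M),
        Rz sM φ v xs ↔ ∃ ws : Fin e → M, Rz sM ψ v ws)
    (k : ℕ) (hk : 0 < k)
    (A : Σ N : Type, L.Structure N) (hA : A ∈ MS.ElemClosure L C)
    (U : ℕ → Set A.1) (a : Fin k → Fin m → A.1) (b : Finset (Fin k) → Fin m' → A.1)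
    (hab : ∀ i J, (RzF (lux A.2 U) φ (Sum.elim (a i) (b J)) ↔ i ∈ J)) :
    ∃ B ∈ C, ∃ (V : ℕ → Set B.1) (a' : Fin k → Fin m → B.1)
      (b' : Finset (Fin k) → Fin m' → B.1),
      ∀ i J, (RzF (lux B.2 V) ((shiftPred ψ ⊓ guardF e).exs) (Sum.elim (a' i) (b' J)) ↔ i ∈ J) := by
  classical
  haveI hNE : Nonempty A.1 := ⟨a ⟨0, hk⟩ ⟨0, hm⟩⟩
  have hwex : ∀ i J, i ∈ J → ∃ ws : Fin e → A.1,
      Rz (lux A.2 U) ψ (Sum.elim (a i) (b J)) ws := fun i J hij =>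
    (hsem A.1 (lux A.2 U) (Sum.elim (a i) (b J)) default).1 ((hab i J).2 hij)
  let w : Fin k → Finset (Fin k) → Fin e → A.1 := fun i J =>
    if h : ∃ ws : Fin e → A.1, Rz (lux A.2 U) ψ (Sum.elim (a i) (b J)) ws
    then Classical.choose h else fun _ => Classical.arbitrary A.1
  have hw : ∀ i J, i ∈ J → Rz (lux A.2 U) ψ (Sum.elim (a i) (b J)) (w i J) := by
    intro i J hij
    have hP := hwex i J hij
    have hwd : w i J = Classical.choose hP := dif_pos hP
    rw [hwd]
    exact Classical.choose_spec hP
  let ι : Type := (Fin k × Fin m) ⊕ ((Finset (Fin k) × Fin m') ⊕ (Fin k × Finset (Fin k) × Fin e))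
  let f : ι → A.1 := Sum.elim (fun pr => a pr.1 pr.2)
      (Sum.elim (fun pr => b pr.1 pr.2) (fun pr => w pr.1 pr.2.1 pr.2.2))
  haveI : Fintype (Σ l : ℕ, L.Relations l) := Fintype.ofFinite _
  have hAσ : @Sentence.Realize L A.1 A.2 (closure (diagram A.2 f)) := by
    rw [realize_closure]
    exact ⟨f, diagram_self A.2 f⟩
  obtain ⟨B, hB, hBσ⟩ := transfer hA _ hAσ
  rw [realize_closure] at hBσ
  obtain ⟨g, hg⟩ := hBσ
  rw [realize_diagram] at hg
  obtain ⟨heq, hrelmap⟩ := hg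
  let V : ℕ → Set B.1 := fun j =>
    Nat.casesOn j (Set.range g) (fun j' => {y | ∃ p : ι, g p = y ∧ f p ∈ U j'})
  refine ⟨B, hB, V, fun i r => g (Sum.inl (i, r)),
    fun J r => g (Sum.inr (Sum.inl (J, r))), ?_⟩
  intro i J
  set vmap : Fin m ⊕ Fin m' → ι :=
    Sum.elim (fun r => Sum.inl (i, r)) (fun r => Sum.inr (Sum.inl (J, r))) with hvmap
  have hfv : (Sum.elim (a i) (b J)) = f ∘ vmap := by
    funext x; cases x <;> rfl
  have hgv : (Sum.elim (fun r => g (Sum.inl (i, r)))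
      (fun r => g (Sum.inr (Sum.inl (J, r)))) : Fin m ⊕ Fin m' → B.1) = g ∘ vmap := by
    funext x; cases x <;> rfl
  have hU' : ∀ (j : ℕ) (p : ι), f p ∈ U j ↔ g p ∈ (fun j => V (j + 1)) j := by
    intro j p
    constructor
    · intro h; exact ⟨p, rfl, h⟩
    · rintro ⟨q, hq, hfq⟩
      have hqp : f q = f p := (heq q p).1 hq
      rwa [hqp] at hfq
  have htrans := qf_transfer hrel A.2 B.2 U (fun j => V (j + 1)) f g heq hrelmap hU' hqf
  have hexs : ∀ (vv : Fin m ⊕ Fin m' → B.1),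
      RzF (lux B.2 V) ((shiftPred ψ ⊓ guardF e).exs) vv ↔
        ∃ ws : Fin e → B.1,
          Rz (lux B.2 V) (shiftPred ψ) vv ws ∧ ∀ t, ws t ∈ Set.range g := by
    intro vv
    letI := lux B.2 V
    rw [RzF, BoundedFormula.realize_exs]
    apply exists_congr; intro ws
    rw [BoundedFormula.realize_inf]
    apply and_congr Iff.rfl
    exact realize_guardF B.2 V vv ws
  rw [hgv, hexs]
  constructor
  · rintro ⟨ws, hws, hrange⟩
    choose pre hpre using hrange
    have hwseq : ws = g ∘ pre := funext fun t => (hpre t).symm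
    rw [hwseq] at hws
    rw [realize_shiftPred hrel B.2 V] at hws
    have hback := (htrans vmap pre).2 hws
    have hφA : RzF (lux A.2 U) φ (Sum.elim (a i) (b J)) :=
      (hsem A.1 (lux A.2 U) (Sum.elim (a i) (b J)) default).2
        ⟨f ∘ pre, by rw [hfv]; exact hback⟩
    exact (hab i J).1 hφA
  · intro hij
    refine ⟨g ∘ (fun t => Sum.inr (Sum.inr (i, J, t))), ?_, fun t => ⟨_, rfl⟩⟩
    rw [realize_shiftPred hrel B.2 V]
    have hfw : f ∘ (fun t : Fin e => (Sum.inr (Sum.inr (i, J, t)) : ι)) = w i J := rfl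
    have hA' : Rz (lux A.2 U) ψ (f ∘ vmap) (f ∘ (fun t : Fin e => (Sum.inr (Sum.inr (i, J, t)) : ι))) := by
      rw [← hfv, hfw]
      exact hw i J hij
    exact (htrans vmap (fun t => Sum.inr (Sum.inr (i, J, t)))).1 hA'

end MSAux

/-- The elementary closure of a class preserves atomic stability and
existential monadic dependence. -/
theorem elementary_closure_preserves_atomic_stability_and_emdependence
    (L : Lang) (hrel : L.IsRelational) (hfin : Finite (Σ n, L.Relations n))
    (C : MS.StructClass L) :
    (MS.AtomicStableClass L C → MS.AtomicStableClass L (MS.ElemClosure L C)) ∧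
    (MS.ExistMonDepClass L C → MS.ExistMonDepClass L (MS.ElemClosure L C)) := by
  constructor
  · intro hC p q φ hat
    obtain ⟨k, hk⟩ := hC p q φ hat
    refine ⟨k, fun A hA => ?_⟩
    rintro ⟨a, b, hab⟩
    have hAσ : @Sentence.Realize L A.1 A.2 (MSAux.closure (MSAux.hgFormula k φ)) := by
      rw [MSAux.realize_closure]
      refine ⟨Sum.elim (fun pr => a pr.1 pr.2) (fun qr => b qr.1 qr.2), ?_⟩
      rw [MSAux.realize_hg]
      intro i j
      have hsum : (Sum.elim (fun r => Sum.elim (fun pr : Fin k × Fin p => a pr.1 pr.2)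
            (fun qr : Fin k × Fin q => b qr.1 qr.2) (Sum.inl (i, r)))
            (fun r => Sum.elim (fun pr : Fin k × Fin p => a pr.1 pr.2)
            (fun qr : Fin k × Fin q => b qr.1 qr.2) (Sum.inr (j, r))))
          = Sum.elim (a i) (b j) := by
        funext x; cases x <;> rfl
      rw [hsum]
      exact hab i j
    obtain ⟨B, hB, hBσ⟩ := MSAux.transfer hA _ hAσ
    rw [MSAux.realize_closure] at hBσ
    obtain ⟨h, hh⟩ := hBσ
    rw [MSAux.realize_hg] at hh
    exact hk B hB ⟨fun i r => h (Sum.inl (i, r)), fun j r => h (Sum.inr (j, r)),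
      fun i j => hh i j⟩
  · intro hC
    rintro ⟨m, m', φ, hex, hpat⟩
    classical
    have hm0 : m ≠ 0 := by
      rintro rfl
      obtain ⟨A, _, U, a, b, hab⟩ := hpat 2
      have hab' : ∀ (i : Fin 2) (J : Finset (Fin 2)),
          MSAux.RzF (MSAux.lux A.2 U) φ (Sum.elim (a i) (b J)) ↔ i ∈ J := hab
      have h01 : a 0 = a 1 := funext fun r => r.elim0
      have h0 := (hab' 0 {0}).2 (Finset.mem_singleton_self 0)
      rw [h01] at h0
      have h1 := (hab' 1 {0}).1 h0
      simp at h1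
    have hm : 0 < m := Nat.pos_of_ne_zero hm0
    obtain ⟨e, hne, ψ, hqf, hsem0⟩ := MSAux.exists_qf (L' := MSAux.Lu L) φ hex
    have hsem : ∀ (M : Type) (sM : (MSAux.Lu L).Structure M)
        (v : Fin m ⊕ Fin m' → M) (xs : Fin 0 → M),
        MSAux.Rz sM φ v xs ↔ ∃ ws : Fin e → M, MSAux.Rz sM ψ v ws := by
      intro M sM v xs
      rw [hsem0 M sM v xs]
      exact ⟨fun ⟨ws, _, h⟩ => ⟨ws, h⟩, fun ⟨ws, h⟩ => ⟨ws, fun i => i.elim0, h⟩⟩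
    have hφ'ex : ((MSAux.shiftPred ψ ⊓ MSAux.guardF e).exs).IsExistential :=
      MSAux.isExistential_exs ((MSAux.shiftPred_isQF hqf).inf MSAux.guardF_isQF).isExistential
    apply hC
    refine ⟨m, m', (MSAux.shiftPred ψ ⊓ MSAux.guardF e).exs, hφ'ex, ?_⟩
    intro k
    obtain ⟨A, hA, U, a, b, hab⟩ := hpat (k + 1)
    obtain ⟨B, hB, V, a', b', hib⟩ := MSAux.key hrel hfin hm φ ψ hqf hsem
      (k + 1) (Nat.succ_pos k) A hA U a b hab
    refine ⟨B, hB, V, fun i => a' i.castSucc, fun J => b' (J.image Fin.castSucc), ?_⟩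
    intro i J
    have hmem : i.castSucc ∈ J.image Fin.castSucc ↔ i ∈ J := by
      simp [Finset.mem_image, Fin.castSucc_inj]
    have := hib i.castSucc (J.image Fin.castSucc)
    rw [hmem] at this
    exact this
end

section
/- Let C be a monotone and monadically dependent class of structures in a finite relational language. Then the class of Gaifman graphs of structures in C is weakly sparse: there is t ∈ ℕ such that no Gaifman graph of a structure in C contains the complete bipartite graph K_{t,t} as a subgraph. -/
open FirstOrder FirstOrder.Language

namespace MDHelp

open Finset

section Counting

variable {D : Type} [Fintype D] [DecidableEq D] {TT d : ℕ}

/-- Master counting lemma: functions whose value at `i₀` lies in a set of `≤ d`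
values determined by the other coordinates are few. -/
lemma master (i₀ : D) (W : ({j : D // j ≠ i₀} → Fin TT) → Finset (Fin TT))
    (hW : ∀ g, (W g).card ≤ d) :
    ((Finset.univ : Finset (D → Fin TT)).filter
      (fun g => g i₀ ∈ W (fun j => g j.1))).card ≤ (d+1) * TT ^ (Fintype.card D - 1) := by
  classical
  have hcard : Fintype.card {j : D // j ≠ i₀} = Fintype.card D - 1 := by
    simp [Fintype.card_subtype_compl, Fintype.card_subtype_eq]
  have key := Finset.card_le_card_of_injOn
    (f := fun g : D → Fin TT =>
      ((fun j : {j : D // j ≠ i₀} => g j.1),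
        (⟨min ((W (fun j => g j.1)).toList.idxOf (g i₀)) d,
          Nat.lt_succ_of_le (min_le_right _ _)⟩ : Fin (d+1))))
    (s := (Finset.univ : Finset (D → Fin TT)).filter
      (fun g => g i₀ ∈ W (fun j => g j.1)))
    (t := Finset.univ) (fun _ _ => Finset.mem_univ _) ?_
  · calc _ ≤ _ := key
    _ = Fintype.card (({j : D // j ≠ i₀} → Fin TT) × Fin (d+1)) := Finset.card_univ
    _ = (d+1) * TT ^ (Fintype.card D - 1) := by
        rw [Fintype.card_prod, Fintype.card_fun, hcard,
          Fintype.card_fin, Fintype.card_fin, mul_comm]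
  · intro g hg g' hg' heq
    replace hg := (Finset.mem_filter.1 hg).2
    replace hg' := (Finset.mem_filter.1 hg').2
    have h1 : (fun j : {j : D // j ≠ i₀} => g j.1) = (fun j => g' j.1) :=
      congrArg Prod.fst heq
    have hmem : g i₀ ∈ (W (fun j => g j.1)).toList := Finset.mem_toList.2 hg
    have hmem' : g' i₀ ∈ (W (fun j => g' j.1)).toList := Finset.mem_toList.2 hg'
    have hlt : (W (fun j => g j.1)).toList.idxOf (g i₀) ≤ d := by
      have := List.idxOf_lt_length_iff.2 hmem
      rw [Finset.length_toList] at this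
      exact le_trans (Nat.le_of_lt_succ (Nat.lt_succ_of_lt this)) (hW _)
    have hlt' : (W (fun j => g' j.1)).toList.idxOf (g' i₀) ≤ d := by
      have := List.idxOf_lt_length_iff.2 hmem'
      rw [Finset.length_toList] at this
      exact le_trans (Nat.le_of_lt_succ (Nat.lt_succ_of_lt this)) (hW _)
    rw [show (fun j : {j : D // j ≠ i₀} => g j.1) = (fun j => g' j.1) from h1] at hlt
    have h2 := congrArg (fun p => (Prod.snd p).1) heq
    simp only [h1, min_eq_left hlt, min_eq_left hlt'] at h2
    rw [h1] at hmem
    have h4 : g i₀ = g' i₀ := (List.idxOf_inj hmem).1 h2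
    funext j
    by_cases hj : j = i₀
    · rw [hj]; exact h4
    · exact congrFun h1 ⟨j, hj⟩

lemma event_eq {u u' : D} (h : u' ≠ u) :
    ((Finset.univ : Finset (D → Fin TT)).filter (fun g => g u = g u')).card
      ≤ 2 * TT ^ (Fintype.card D - 1) := by
  classical
  have := master (TT := TT) (d := 1) u (fun rg => {rg ⟨u', h⟩}) (fun g => by simp)
  simpa using this

lemma event_mem {V : Type} [DecidableEq V] (i₀ : D) (h : Fin TT → V)
    (hinj : Function.Injective h)
    (A : ({j : D // j ≠ i₀} → Fin TT) → Finset V) (hA : ∀ rg, (A rg).card ≤ d) :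
    ((Finset.univ : Finset (D → Fin TT)).filter
      (fun g => h (g i₀) ∈ A (fun j => g j.1))).card
      ≤ (d+1) * TT ^ (Fintype.card D - 1) := by
  classical
  have key := master (TT := TT) (d := d) i₀
    (fun rg => Finset.univ.filter (fun c => h c ∈ A rg)) (fun rg => ?_)
  · simpa using key
  · refine le_trans (Finset.card_le_card_of_injOn h
      (fun c hc => (Finset.mem_filter.1 hc).2) (fun a _ b _ hab => hinj hab)) (hA rg)

end Counting

lemma selection (V : Type) (k N d : ℕ) (hN : 0 < N) (TT : ℕ)
    (hTT : TT = 2*((k+N)*(k+N)) + (d+1)*(k*N*(k+N)) + 1)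
    (f : Fin TT ⊕ Fin TT → V) (hf : Function.Injective f)
    (E : Fin TT → Fin TT → Finset V)
    (hEcard : ∀ a b, (E a b).card ≤ d)
    (hEa : ∀ a b, f (Sum.inl a) ∉ E a b)
    (hEb : ∀ a b, f (Sum.inr b) ∉ E a b) :
    ∃ γ : Fin k ⊕ Fin N → Fin TT, Function.Injective γ ∧
      ∀ (i : Fin k) (j : Fin N) (u : Fin k ⊕ Fin N),
        f (Sum.map (fun i' => γ (Sum.inl i')) (fun j' => γ (Sum.inr j')) u)
          ∉ E (γ (Sum.inl i)) (γ (Sum.inr j)) := by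
  classical
  set M := k + N with hM
  have hMpos : 0 < M := by omega
  have hcardD : Fintype.card (Fin k ⊕ Fin N) = M := by simp [hM]
  by_contra hcon
  push_neg at hcon
  set B1 : Finset ((Fin k ⊕ Fin N) → Fin TT) :=
    Finset.univ.filter (fun g => ∃ u u' : Fin k ⊕ Fin N, u' ≠ u ∧ g u = g u') with hB1
  set B2a : Finset ((Fin k ⊕ Fin N) → Fin TT) :=
    Finset.univ.filter (fun g => ∃ (i : Fin k) (j : Fin N) (i₂ : Fin k),
      f (Sum.inl (g (Sum.inl i₂))) ∈ E (g (Sum.inl i)) (g (Sum.inr j))) with hB2a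
  set B2b : Finset ((Fin k ⊕ Fin N) → Fin TT) :=
    Finset.univ.filter (fun g => ∃ (i : Fin k) (j : Fin N) (j₂ : Fin N),
      f (Sum.inr (g (Sum.inr j₂))) ∈ E (g (Sum.inl i)) (g (Sum.inr j))) with hB2b
  have cover : (Finset.univ : Finset ((Fin k ⊕ Fin N) → Fin TT)) ⊆ B1 ∪ B2a ∪ B2b := by
    intro g _
    by_cases hinj : Function.Injective g
    · obtain ⟨i, j, u, hu⟩ := hcon g hinj
      cases u with
      | inl i₂ =>
        refine Finset.mem_union_left _ (Finset.mem_union_right _ ?_)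
        exact Finset.mem_filter.2 ⟨Finset.mem_univ _, ⟨i, j, i₂, hu⟩⟩
      | inr j₂ =>
        refine Finset.mem_union_right _ ?_
        exact Finset.mem_filter.2 ⟨Finset.mem_univ _, ⟨i, j, j₂, hu⟩⟩
    · rw [Function.not_injective_iff] at hinj
      obtain ⟨u, u', heq, hne⟩ := hinj
      exact Finset.mem_union_left _ (Finset.mem_union_left _
        (Finset.mem_filter.2 ⟨Finset.mem_univ _, ⟨u', u, hne, heq.symm⟩⟩))
  have hB1card : B1.card ≤ (M*M) * (2 * TT ^ (M - 1)) := by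
    have hsub : B1 ⊆ (Finset.univ : Finset ((Fin k ⊕ Fin N) × (Fin k ⊕ Fin N))).biUnion
        (fun p => Finset.univ.filter (fun g => p.2 ≠ p.1 ∧ g p.1 = g p.2)) := by
      intro g hg
      obtain ⟨u, u', hne, he⟩ := (Finset.mem_filter.1 hg).2
      exact Finset.mem_biUnion.2 ⟨(u, u'), Finset.mem_univ _,
        Finset.mem_filter.2 ⟨Finset.mem_univ _, hne, he⟩⟩
    refine le_trans (Finset.card_le_card hsub) (le_trans (Finset.card_biUnion_le) ?_)
    have hbound : ∀ p : (Fin k ⊕ Fin N) × (Fin k ⊕ Fin N),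
        (Finset.univ.filter (fun g : (Fin k ⊕ Fin N) → Fin TT =>
          p.2 ≠ p.1 ∧ g p.1 = g p.2)).card ≤ 2 * TT ^ (M - 1) := by
      intro p
      by_cases hp : p.2 = p.1
      · rw [Finset.filter_false_of_mem (fun g _ h => (h.1 hp).elim)]
        simp
      · refine le_trans (Finset.card_le_card
          (t := Finset.univ.filter (fun g : (Fin k ⊕ Fin N) → Fin TT => g p.1 = g p.2))
          (fun g hg => Finset.mem_filter.2 ⟨Finset.mem_univ _, (Finset.mem_filter.1 hg).2.2⟩)) ?_
        have := event_eq (TT := TT) (u := p.1) (u' := p.2) hp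
        rwa [hcardD] at this
    refine le_trans (Finset.sum_le_card_nsmul _ _ _ (fun p _ => hbound p)) ?_
    simp [hcardD, smul_eq_mul]
  have hB2abound : ∀ (t : Fin k × Fin N × Fin k),
      (Finset.univ.filter (fun g : (Fin k ⊕ Fin N) → Fin TT =>
        f (Sum.inl (g (Sum.inl t.2.2))) ∈ E (g (Sum.inl t.1)) (g (Sum.inr t.2.1)))).card
        ≤ (d+1) * TT ^ (M - 1) := by
    rintro ⟨i, j, i₂⟩
    by_cases hii : i₂ = i
    · subst hii
      rw [Finset.filter_false_of_mem (fun g _ h => hEa _ _ h)]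
      simp
    · have key := event_mem (TT := TT) (d := d) (i₀ := (Sum.inl i₂ : Fin k ⊕ Fin N))
        (h := fun c => f (Sum.inl c)) (hinj := fun a b hab => Sum.inl_injective (hf hab))
        (A := fun rg => E (rg ⟨Sum.inl i, by simp only [ne_eq, Sum.inl.injEq]; exact fun h => hii h.symm⟩) (rg ⟨Sum.inr j, by simp⟩))
        (hA := fun rg => hEcard _ _)
      rw [hcardD] at key
      exact key
  have hB2bbound : ∀ (t : Fin k × Fin N × Fin N),
      (Finset.univ.filter (fun g : (Fin k ⊕ Fin N) → Fin TT =>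
        f (Sum.inr (g (Sum.inr t.2.2))) ∈ E (g (Sum.inl t.1)) (g (Sum.inr t.2.1)))).card
        ≤ (d+1) * TT ^ (M - 1) := by
    rintro ⟨i, j, j₂⟩
    by_cases hjj : j₂ = j
    · subst hjj
      rw [Finset.filter_false_of_mem (fun g _ h => hEb _ _ h)]
      simp
    · have key := event_mem (TT := TT) (d := d) (i₀ := (Sum.inr j₂ : Fin k ⊕ Fin N))
        (h := fun c => f (Sum.inr c)) (hinj := fun a b hab => Sum.inr_injective (hf hab))
        (A := fun rg => E (rg ⟨Sum.inl i, by simp⟩) (rg ⟨Sum.inr j, by simp only [ne_eq, Sum.inr.injEq]; exact fun h => hjj h.symm⟩))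
        (hA := fun rg => hEcard _ _)
      rw [hcardD] at key
      exact key
  have hB2acard : B2a.card ≤ (k*N*k) * ((d+1) * TT ^ (M-1)) := by
    have hsub : B2a ⊆ (Finset.univ : Finset (Fin k × Fin N × Fin k)).biUnion
        (fun t => Finset.univ.filter (fun g =>
          f (Sum.inl (g (Sum.inl t.2.2))) ∈ E (g (Sum.inl t.1)) (g (Sum.inr t.2.1)))) := by
      intro g hg
      obtain ⟨i, j, i₂, h⟩ := (Finset.mem_filter.1 hg).2
      exact Finset.mem_biUnion.2 ⟨(i, j, i₂), Finset.mem_univ _,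
        Finset.mem_filter.2 ⟨Finset.mem_univ _, h⟩⟩
    refine le_trans (Finset.card_le_card hsub) (le_trans (Finset.card_biUnion_le) ?_)
    refine le_trans (Finset.sum_le_card_nsmul _ _ _ (fun t _ => hB2abound t)) ?_
    simp [smul_eq_mul, mul_assoc]
  have hB2bcard : B2b.card ≤ (k*N*N) * ((d+1) * TT ^ (M-1)) := by
    have hsub : B2b ⊆ (Finset.univ : Finset (Fin k × Fin N × Fin N)).biUnion
        (fun t => Finset.univ.filter (fun g =>
          f (Sum.inr (g (Sum.inr t.2.2))) ∈ E (g (Sum.inl t.1)) (g (Sum.inr t.2.1)))) := by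
      intro g hg
      obtain ⟨i, j, j₂, h⟩ := (Finset.mem_filter.1 hg).2
      exact Finset.mem_biUnion.2 ⟨(i, j, j₂), Finset.mem_univ _,
        Finset.mem_filter.2 ⟨Finset.mem_univ _, h⟩⟩
    refine le_trans (Finset.card_le_card hsub) (le_trans (Finset.card_biUnion_le) ?_)
    refine le_trans (Finset.sum_le_card_nsmul _ _ _ (fun t _ => hB2bbound t)) ?_
    simp [smul_eq_mul, mul_assoc]
  have htotal : TT ^ M ≤ B1.card + B2a.card + B2b.card := by
    have := Finset.card_le_card cover
    have hcu : (Finset.univ : Finset ((Fin k ⊕ Fin N) → Fin TT)).card = TT ^ M := by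
      simp [Fintype.card_fun, hcardD]
    calc TT ^ M = _ := hcu.symm
      _ ≤ (B1 ∪ B2a ∪ B2b).card := this
      _ ≤ _ := le_trans (Finset.card_union_le _ _)
          (Nat.add_le_add_right (Finset.card_union_le _ _) _)
  have hsum : B1.card + B2a.card + B2b.card ≤ (TT - 1) * TT ^ (M-1) := by
    have : (M*M) * (2 * TT ^ (M - 1)) + (k*N*k) * ((d+1) * TT ^ (M-1))
        + (k*N*N) * ((d+1) * TT ^ (M-1)) = (TT - 1) * TT ^ (M-1) := by
      have h1 : TT - 1 = 2*(M*M) + (d+1)*(k*N*M) := by omega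
      rw [h1, hM]
      ring
    omega
  have h2 : M - 1 + 1 = M := Nat.succ_pred_eq_of_pos hMpos
  have hpow : TT ^ M = TT * TT ^ (M - 1) := by
    calc TT ^ M = TT ^ (M-1+1) := by rw [h2]
      _ = TT ^ (M-1) * TT := pow_succ _ _
      _ = TT * TT ^ (M-1) := mul_comm _ _
  have hTTpos : 0 < TT ^ (M-1) := Nat.pow_pos (by omega)
  have : TT * TT ^ (M-1) ≤ (TT - 1) * TT ^ (M-1) := by
    rw [← hpow]; exact le_trans htotal hsum
  have hlt : (TT - 1) * TT ^ (M-1) < TT * TT ^ (M-1) :=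
    mul_lt_mul_of_pos_right (by omega) hTTpos
  exact lt_irrefl _ (lt_of_le_of_lt this hlt)

section Formula

variable (L : Lang)

structure Idx (L : Lang) : Type where
  n : ℕ
  R : L.Relations n
  p : Fin n
  q : Fin n

def idxEquiv : Idx L ≃ Σ x : (Σ n : ℕ, L.Relations n), Fin x.1 × Fin x.1 where
  toFun σ := ⟨⟨σ.n, σ.R⟩, (σ.p, σ.q)⟩
  invFun x := ⟨x.1.1, x.1.2, x.2.1, x.2.2⟩
  left_inv := fun _ => rfl
  right_inv := fun _ => rfl

def exF (σ : Idx L) : (L.sum MS.unaryLang).Formula (Fin 1 ⊕ Fin 1) :=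
  (((Relations.boundedFormula (Sum.inl σ.R) (fun r => Term.var (Sum.inr r))) ⊓
    Term.bdEqual (Term.var (Sum.inl (Sum.inl 0))) (Term.var (Sum.inr σ.p))) ⊓
    Term.bdEqual (Term.var (Sum.inl (Sum.inr 0))) (Term.var (Sum.inr σ.q))).exs

lemma realize_exF {V : Type} [str : (L.sum MS.unaryLang).Structure V] (σ : Idx L)
    (v : Fin 1 ⊕ Fin 1 → V) :
    (exF L σ).Realize v ↔ ∃ z : Fin σ.n → V,
      Structure.RelMap (L := L.sum MS.unaryLang) (M := V) (Sum.inl σ.R) z ∧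
        v (Sum.inl 0) = z σ.p ∧ v (Sum.inr 0) = z σ.q := by
  rw [exF, BoundedFormula.realize_exs]
  simp only [BoundedFormula.realize_inf, BoundedFormula.realize_bdEqual, BoundedFormula.realize_rel,
    Term.realize, Sum.elim_inl, Sum.elim_inr, and_assoc]
  exact Iff.rfl

noncomputable def phi [Fintype (Idx L)] : (L.sum MS.unaryLang).Formula (Fin 1 ⊕ Fin 1) :=
  ((Finset.univ : Finset (Idx L)).toList.map (exF L)).foldr (· ⊔ ·) ⊥

lemma realize_phi [Fintype (Idx L)] {V : Type} [str : (L.sum MS.unaryLang).Structure V]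
    (v : Fin 1 ⊕ Fin 1 → V) :
    (phi L).Realize v ↔ ∃ σ : Idx L, (exF L σ).Realize v := by
  rw [phi, Formula.Realize, BoundedFormula.realize_foldr_sup]
  constructor
  · rintro ⟨ψ, hmem, hψ⟩
    obtain ⟨σ, _, rfl⟩ := List.mem_map.1 hmem
    exact ⟨σ, hψ⟩
  · rintro ⟨σ, hσ⟩
    exact ⟨exF L σ, List.mem_map.2 ⟨σ, Finset.mem_toList.2 (Finset.mem_univ σ), rfl⟩, hσ⟩

end Formula

end MDHelp

/-- If `C` is a monotone, monadically dependent class of structures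
in a finite relational language, then the class of Gaifman graphs of structures in `C`
is weakly sparse: for some `t`, no Gaifman graph contains `K_{t,t}` as a subgraph. -/
theorem monotone_dependent_implies_weakly_sparse
    (L : Lang) (hrel : L.IsRelational) (hfin : Finite (Σ n, L.Relations n))
    (C : MS.StructClass L)
    (hmono : ∀ B ∈ C, ∀ A : Σ N : Type, L.Structure N, MS.IsWeakSub L A B → A ∈ C)
    (hdep : MS.MonDepClass L C) :
    ∃ t : ℕ, ∀ A ∈ C, ¬ MS.HasBiclique (MS.gaif L A.2) t := by
  classical
  by_contra hcon
  push_neg at hcon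
  haveI := hfin
  haveI : Finite (MDHelp.Idx L) := Finite.of_equiv _ (MDHelp.idxEquiv L).symm
  letI : Fintype (MDHelp.Idx L) := Fintype.ofFinite _
  letI : Fintype (Σ n, L.Relations n) := Fintype.ofFinite _
  set d : ℕ := Finset.univ.sup (fun x : Σ n, L.Relations n => x.1) with hd_def
  have hd : ∀ (m : ℕ) (R : L.Relations m), m ≤ d :=
    fun m R => Finset.le_sup (f := fun x : Σ n, L.Relations n => x.1) (Finset.mem_univ ⟨m, R⟩)
  apply hdep
  refine ⟨1, 1, MDHelp.phi L, fun k => ?_⟩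
  set N := Fintype.card (Finset (Fin k)) with hN_def
  have hN : 0 < N := Fintype.card_pos
  set e := Fintype.equivFin (Finset (Fin k)) with he_def
  set TT := 2*((k+N)*(k+N)) + (d+1)*(k*N*(k+N)) + 1 with hTT_def
  obtain ⟨B, hB, f, hfinj, hadj⟩ := hcon TT
  have hw : ∀ a b : Fin TT, ∃ w : Σ n : ℕ, (L.Relations n) × (Fin n → B.1),
      B.2.RelMap w.2.1 w.2.2 ∧ (∃ p, w.2.2 p = f (Sum.inl a)) ∧
        (∃ q, w.2.2 q = f (Sum.inr b)) := by
    intro a b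
    obtain ⟨-, n, R, x, hR, hu, hv⟩ := hadj a b
    exact ⟨⟨n, (R, x)⟩, hR, hu, hv⟩
  choose w hw1 hw2 hw3 using hw
  choose P hP using hw2
  choose Q hQ using hw3
  set E : Fin TT → Fin TT → Finset B.1 := fun a b =>
    (Finset.image (w a b).2.2 Finset.univ) \ {f (Sum.inl a), f (Sum.inr b)} with hE_def
  have hEcard : ∀ a b, (E a b).card ≤ d := by
    intro a b
    refine le_trans (Finset.card_le_card (Finset.sdiff_subset)) (le_trans Finset.card_image_le ?_)
    simpa using hd (w a b).1 (w a b).2.1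
  have hEa : ∀ a b, f (Sum.inl a) ∉ E a b := by
    intro a b h
    exact (Finset.mem_sdiff.1 h).2 (by simp)
  have hEb : ∀ a b, f (Sum.inr b) ∉ E a b := by
    intro a b h
    exact (Finset.mem_sdiff.1 h).2 (by simp)
  obtain ⟨γ, hγinj, hγgood⟩ :=
    MDHelp.selection B.1 k N d hN TT hTT_def f hfinj E hEcard hEa hEb
  set aIdx : Fin k → Fin TT := fun i => γ (Sum.inl i) with haIdx
  set bIdx : Finset (Fin k) → Fin TT := fun J => γ (Sum.inr (e J)) with hbIdx
  set av : Fin k → B.1 := fun i => f (Sum.inl (aIdx i)) with hav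
  set bv : Finset (Fin k) → B.1 := fun J => f (Sum.inr (bIdx J)) with hbv
  set s' : L.Structure B.1 :=
    { funMap := fun {m} F _ => (hrel m).elim F
      RelMap := fun {m} R x => ∃ (i : Fin k) (J : Finset (Fin k)), i ∈ J ∧
          w (aIdx i) (bIdx J) = ⟨m, (R, x)⟩ } with hs'
  have hA'C : (⟨B.1, s'⟩ : Σ N : Type, L.Structure N) ∈ C := by
    refine hmono B hB _ ⟨id, Function.injective_id, ?_⟩
    rintro m R x ⟨i, J, hiJ, heq⟩
    have h1 := hw1 (aIdx i) (bIdx J)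
    rw [heq] at h1
    exact h1
  refine ⟨⟨B.1, s'⟩, hA'C, fun _ => ∅, (fun i _ => av i), (fun J _ => bv J),
    fun i J => ?_⟩
  constructor
  · intro hre
    rw [MDHelp.realize_phi] at hre
    obtain ⟨σ, hσ⟩ := hre
    rw [MDHelp.realize_exF] at hσ
    obtain ⟨z, hRel, hp1, hq1⟩ := hσ
    obtain ⟨i', J', hiJ', heq⟩ := hRel
    have hp1' : av i = z σ.p := hp1
    have hq1' : bv J = z σ.q := hq1
    have hmemp : av i ∈ Finset.image (w (aIdx i') (bIdx J')).2.2 Finset.univ := by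
      rw [hp1', heq]
      exact Finset.mem_image_of_mem _ (Finset.mem_univ σ.p)
    have hmemq : bv J ∈ Finset.image (w (aIdx i') (bIdx J')).2.2 Finset.univ := by
      rw [hq1', heq]
      exact Finset.mem_image_of_mem _ (Finset.mem_univ σ.q)
    have hi : i = i' := by
      have hE' : av i ∉ E (aIdx i') (bIdx J') := hγgood i' (e J') (Sum.inl i)
      have hpair : av i ∈ ({f (Sum.inl (aIdx i')), f (Sum.inr (bIdx J'))} : Finset B.1) := by
        by_contra hno
        exact hE' (Finset.mem_sdiff.2 ⟨hmemp, hno⟩)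
      rcases Finset.mem_insert.1 hpair with h1 | h1
      · exact Sum.inl_injective (hγinj (Sum.inl_injective (hfinj h1)))
      · exact absurd (hfinj (Finset.mem_singleton.1 h1)) (Sum.inl_ne_inr)
    have hJ : J = J' := by
      have hE' : bv J ∉ E (aIdx i') (bIdx J') := hγgood i' (e J') (Sum.inr (e J))
      have hpair : bv J ∈ ({f (Sum.inl (aIdx i')), f (Sum.inr (bIdx J'))} : Finset B.1) := by
        by_contra hno
        exact hE' (Finset.mem_sdiff.2 ⟨hmemq, hno⟩)
      rcases Finset.mem_insert.1 hpair with h1 | h1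
      · exact absurd (hfinj h1) (Sum.inr_ne_inl)
      · exact e.injective (Sum.inr_injective (hγinj
          (Sum.inr_injective (hfinj (Finset.mem_singleton.1 h1)))))
    rw [hi, hJ]
    exact hiJ'
  · intro hiJ
    rw [MDHelp.realize_phi]
    refine ⟨⟨(w (aIdx i) (bIdx J)).1, (w (aIdx i) (bIdx J)).2.1,
      P (aIdx i) (bIdx J), Q (aIdx i) (bIdx J)⟩, ?_⟩
    rw [MDHelp.realize_exF]
    exact ⟨(w (aIdx i) (bIdx J)).2.2, ⟨i, J, hiJ, rfl⟩, (hP _ _).symm, (hQ _ _).symm⟩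
end
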